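/- arXiv:math/0406307 — 4 statements merged into one kernel-verified Lean document; each statement's English description precedes it below -/
import Mathlib

section
/- Let f(x) = x^n + a_{n-1}x^{n-1} + ··· + a_1 x + a_0 ∈ ℚ[x] be a monic polynomial of degree n ≥ 1 with a_0 ≠ 0, and let p be a prime. Set m = ord_p(a_0). If gcd(m, n) = 1 and ord_p(a_j) ≥ m·(1 - j/n) for all j = 0, …, n-1, then f is irreducible over ℚ. -/
open Polynomial Finset


private lemma padic_sum_gt {p : ℕ} [Fact p.Prime] {ι : Type*} (s : Finset ι) (F : ι → ℚ) (c : ℚ)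
    (h : ∀ a ∈ s, F a ≠ 0 → c < (padicValRat p (F a) : ℚ)) :
    (∑ a ∈ s, F a) = 0 ∨ ((∑ a ∈ s, F a) ≠ 0 ∧ c < (padicValRat p (∑ a ∈ s, F a) : ℚ)) := by
  classical
  induction s using Finset.induction_on with
  | empty => exact Or.inl (by simp)
  | insert _ _ ha ih =>
    rename_i a s
    rw [Finset.sum_insert ha]
    have ih' := ih (fun b hb hb' => h b (Finset.mem_insert_of_mem hb) hb')
    by_cases hFa : F a = 0
    · rw [hFa, zero_add]; exact ih'
    have hc := h a (Finset.mem_insert_self a s) hFa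
    rcases ih' with h0 | ⟨hne, hle⟩
    · rw [h0, add_zero]
      exact Or.inr ⟨hFa, hc⟩
    by_cases hsum : F a + ∑ b ∈ s, F b = 0
    · exact Or.inl hsum
    · refine Or.inr ⟨hsum, ?_⟩
      have hmin := padicValRat.min_le_padicValRat_add (p := p) hsum
      have h2 : c < ((min (padicValRat p (F a)) (padicValRat p (∑ b ∈ s, F b)) : ℤ) : ℚ) := by
        push_cast; exact lt_min hc hle
      exact h2.trans_le (by exact_mod_cast hmin)

private lemma padic_dominant {p : ℕ} [Fact p.Prime] (x y : ℚ) (hx : x ≠ 0)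
    (hy : y = 0 ∨ (y ≠ 0 ∧ (padicValRat p x : ℚ) < (padicValRat p y : ℚ))) :
    x + y ≠ 0 ∧ padicValRat p (x + y) = padicValRat p x := by
  rcases hy with rfl | ⟨hy0, hlt⟩
  · simpa using hx
  have hlt' : padicValRat p x < padicValRat p y := by exact_mod_cast hlt
  have hne : x + y ≠ 0 := by
    intro h
    have hyx : y = -x := by linarith
    rw [hyx, padicValRat.neg] at hlt'
    exact lt_irrefl _ hlt'
  exact ⟨hne, padicValRat.add_eq_of_lt hne hx hy0 hlt'⟩

private lemma exists_least_min (s : Finset ℕ) (hs : s.Nonempty) (f : ℕ → ℚ) :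
    ∃ j ∈ s, (∀ i ∈ s, f j ≤ f i) ∧ ∀ i ∈ s, i < j → f j < f i := by
  classical
  obtain ⟨b, hb, hbe⟩ := Finset.exists_mem_eq_inf' hs f
  have hA : (s.filter (fun i => f i = s.inf' hs f)).Nonempty := ⟨b, Finset.mem_filter.2 ⟨hb, hbe.symm⟩⟩
  set j := (s.filter (fun i => f i = s.inf' hs f)).min' hA with hj
  have hjmem := (s.filter (fun i => f i = s.inf' hs f)).min'_mem hA
  rw [Finset.mem_filter] at hjmem
  refine ⟨j, hjmem.1, fun i hi => hjmem.2 ▸ Finset.inf'_le f hi, fun i hi hij => ?_⟩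
  rcases lt_or_eq_of_le (hjmem.2 ▸ Finset.inf'_le f hi) with h | h
  · exact h
  · exfalso
    have : i ∈ s.filter (fun i => f i = s.inf' hs f) :=
      Finset.mem_filter.2 ⟨hi, by rw [← h, hjmem.2]⟩
    exact absurd (Finset.min'_le _ _ this) (by omega)

private lemma gauss_attained' {p : ℕ} [Fact p.Prime] (G H : Polynomial ℚ) (t : ℚ) (jG jH : ℕ)
    (hjG : G.coeff jG ≠ 0) (hjH : H.coeff jH ≠ 0)
    (hGlow : ∀ i : ℕ, G.coeff i ≠ 0 →
      (padicValRat p (G.coeff jG) : ℚ) + jG * t ≤ (padicValRat p (G.coeff i) : ℚ) + i * t)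
    (hGlt : ∀ i : ℕ, i < jG → G.coeff i ≠ 0 →
      (padicValRat p (G.coeff jG) : ℚ) + jG * t < (padicValRat p (G.coeff i) : ℚ) + i * t)
    (hHlow : ∀ i : ℕ, H.coeff i ≠ 0 →
      (padicValRat p (H.coeff jH) : ℚ) + jH * t ≤ (padicValRat p (H.coeff i) : ℚ) + i * t)
    (hHlt : ∀ i : ℕ, i < jH → H.coeff i ≠ 0 →
      (padicValRat p (H.coeff jH) : ℚ) + jH * t < (padicValRat p (H.coeff i) : ℚ) + i * t) :
    (G * H).coeff (jG + jH) ≠ 0 ∧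
      padicValRat p ((G * H).coeff (jG + jH)) =
        padicValRat p (G.coeff jG) + padicValRat p (H.coeff jH) := by
  rw [Polynomial.coeff_mul]
  have hmem : ((jG, jH) : ℕ × ℕ) ∈ Finset.HasAntidiagonal.antidiagonal (jG + jH) := Finset.HasAntidiagonal.mem_antidiagonal.2 rfl
  rw [← Finset.add_sum_erase _ _ hmem]
  have hx : G.coeff jG * H.coeff jH ≠ 0 := mul_ne_zero hjG hjH
  have hrest := padic_sum_gt (p := p) ((Finset.HasAntidiagonal.antidiagonal (jG + jH)).erase (jG, jH))
    (fun x => G.coeff x.1 * H.coeff x.2)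
    ((padicValRat p (G.coeff jG) : ℚ) + (padicValRat p (H.coeff jH) : ℚ)) ?_
  · have hdom := padic_dominant (p := p) (G.coeff jG * H.coeff jH)
      (∑ x ∈ (Finset.HasAntidiagonal.antidiagonal (jG + jH)).erase (jG, jH), G.coeff x.1 * H.coeff x.2) hx ?_
    · refine ⟨hdom.1, ?_⟩
      rw [hdom.2, padicValRat.mul hjG hjH]
    · rcases hrest with h0 | ⟨hne, hlt⟩
      · exact Or.inl h0
      · refine Or.inr ⟨hne, ?_⟩
        rw [padicValRat.mul hjG hjH]
        push_cast
        exact hlt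
  · rintro ⟨i, j⟩ hij hne
    dsimp only at hne ⊢
    have hmem' := Finset.mem_of_mem_erase hij
    have hij' : i + j = jG + jH := Finset.HasAntidiagonal.mem_antidiagonal.1 hmem'
    have hnepair : ((i, j) : ℕ × ℕ) ≠ (jG, jH) := Finset.ne_of_mem_erase hij
    have hGi : G.coeff i ≠ 0 := left_ne_zero_of_mul hne
    have hHj : H.coeff j ≠ 0 := right_ne_zero_of_mul hne
    rw [padicValRat.mul hGi hHj]
    push_cast
    have hsum : (i : ℚ) * t + (j : ℚ) * t = (jG : ℚ) * t + (jH : ℚ) * t := by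
      have : (i : ℚ) + j = (jG : ℚ) + jH := by exact_mod_cast hij'
      linear_combination t * this
    rcases lt_trichotomy i jG with h | h | h
    · have h1 := hGlt i h hGi
      have h2 := hHlow j hHj
      linarith
    · exfalso
      apply hnepair
      have : j = jH := by omega
      rw [h, this]
    · have hjlt : j < jH := by omega
      have h1 := hHlt j hjlt hHj
      have h2 := hGlow i hGi
      linarith

/-- **Eisenstein–Dumas criterion.** If `f` is monic of degree `n ≥ 1` over `ℚ`,
`p` is prime, `m = ord_p(a₀)` with `gcd(m, n) = 1`, and `ord_p(a_j) ≥ m (1 - j/n)`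
for all `j = 0, …, n-1` (the condition being vacuous when `a_j = 0`, since the zero
coefficient has infinite valuation), then `f` is irreducible over `ℚ`. -/
theorem eisenstein_dumas_irreducible (f : Polynomial ℚ) (n : ℕ) (hn : 1 ≤ n)
    (hdeg : f.natDegree = n) (hmonic : f.Monic) (h0 : f.coeff 0 ≠ 0)
    (p : ℕ) (hp : p.Prime) (m : ℤ) (hm : m = padicValRat p (f.coeff 0))
    (hgcd : Int.gcd m (n : ℤ) = 1)
    (hval : ∀ j < n, f.coeff j ≠ 0 →
      (m : ℚ) * (1 - (j : ℚ) / (n : ℚ)) ≤ ((padicValRat p (f.coeff j) : ℤ) : ℚ)) :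
    Irreducible f := by
  haveI : Fact p.Prime := ⟨hp⟩
  have hn0 : (n : ℚ) ≠ 0 := Nat.cast_ne_zero.2 (by omega)
  by_contra hirr
  rw [irreducible_iff] at hirr
  push_neg at hirr
  have hfne : f ≠ 0 := hmonic.ne_zero
  have hfnu : ¬ IsUnit f := by
    intro h
    have := Polynomial.natDegree_eq_zero_of_isUnit h
    omega
  obtain ⟨a, b, hab, hua, hub⟩ := hirr hfnu
  have ha0 : a ≠ 0 := by rintro rfl; simp at hab; exact hfne hab
  have hb0 : b ≠ 0 := by rintro rfl; simp at hab; exact hfne hab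
  set ra := a.natDegree with hra
  set rb := b.natDegree with hrb
  have hsum : ra + rb = n := by
    rw [hra, hrb, ← Polynomial.natDegree_mul ha0 hb0, ← hab, hdeg]
  have hrapos : 1 ≤ ra := by
    by_contra h
    have h' : a.natDegree = 0 := by omega
    obtain ⟨c, rfl⟩ := Polynomial.natDegree_eq_zero.1 h'
    exact hua (isUnit_C.2 (isUnit_iff_ne_zero.2 (by simpa using ha0)))
  have hrbpos : 1 ≤ rb := by
    by_contra h
    have h' : b.natDegree = 0 := by omega
    obtain ⟨c, rfl⟩ := Polynomial.natDegree_eq_zero.1 h'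
    exact hub (isUnit_C.2 (isUnit_iff_ne_zero.2 (by simpa using hb0)))
  -- coefficients
  have hc0 : a.coeff 0 * b.coeff 0 = f.coeff 0 := by rw [hab, Polynomial.mul_coeff_zero]
  have ha00 : a.coeff 0 ≠ 0 := fun h => h0 (by rw [← hc0, h, zero_mul])
  have hb00 : b.coeff 0 ≠ 0 := fun h => h0 (by rw [← hc0, h, mul_zero])
  have hlead : a.coeff ra * b.coeff rb = 1 := by
    have := hmonic.leadingCoeff
    rw [hab, Polynomial.leadingCoeff_mul] at this
    exact this
  have hla : a.coeff ra ≠ 0 := fun h => by simp [h] at hlead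
  have hlb : b.coeff rb ≠ 0 := fun h => by simp [h] at hlead
  have hleadval : padicValRat p (a.coeff ra) + padicValRat p (b.coeff rb) = 0 := by
    rw [← padicValRat.mul hla hlb, hlead, padicValRat.one]
  have hc0val : padicValRat p (a.coeff 0) + padicValRat p (b.coeff 0) = m := by
    rw [← padicValRat.mul ha00 hb00, hc0, hm]
  -- the Gauss weight
  set t : ℚ := (m : ℚ) / n with ht
  have hnt : (n : ℚ) * t = m := by rw [ht]; field_simp
  -- lower bound for f
  have hflow : ∀ l : ℕ, f.coeff l ≠ 0 → (m : ℚ) ≤ (padicValRat p (f.coeff l) : ℚ) + l * t := by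
    intro l hl
    have hln : l ≤ n := hdeg ▸ Polynomial.le_natDegree_of_ne_zero hl
    rcases eq_or_lt_of_le hln with rfl | hlt
    · have : f.coeff l = 1 := by
        rw [← hdeg] at *
        exact hmonic.coeff_natDegree
      rw [this, padicValRat.one]
      simp only [Int.cast_zero, zero_add]
      rw [ht]
      field_simp
      exact le_rfl
    · have h1 := hval l hlt hl
      have h2 : (m : ℚ) * (1 - (l : ℚ) / n) = m - l * t := by rw [ht]; ring
      rw [h2] at h1
      linarith
  -- least minimizers for a and b
  obtain ⟨jA, hjAs, hjAlow, hjAlt⟩ := exists_least_min a.support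
    (Polynomial.nonempty_support_iff.2 ha0)
    (fun i => (padicValRat p (a.coeff i) : ℚ) + i * t)
  obtain ⟨jB, hjBs, hjBlow, hjBlt⟩ := exists_least_min b.support
    (Polynomial.nonempty_support_iff.2 hb0)
    (fun i => (padicValRat p (b.coeff i) : ℚ) + i * t)
  rw [Polynomial.mem_support_iff] at hjAs hjBs
  have hAlow : ∀ i : ℕ, a.coeff i ≠ 0 →
      (padicValRat p (a.coeff jA) : ℚ) + jA * t ≤ (padicValRat p (a.coeff i) : ℚ) + i * t :=
    fun i hi => hjAlow i (Polynomial.mem_support_iff.2 hi)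
  have hAlt : ∀ i : ℕ, i < jA → a.coeff i ≠ 0 →
      (padicValRat p (a.coeff jA) : ℚ) + jA * t < (padicValRat p (a.coeff i) : ℚ) + i * t :=
    fun i hlt hi => hjAlt i (Polynomial.mem_support_iff.2 hi) hlt
  have hBlow : ∀ i : ℕ, b.coeff i ≠ 0 →
      (padicValRat p (b.coeff jB) : ℚ) + jB * t ≤ (padicValRat p (b.coeff i) : ℚ) + i * t :=
    fun i hi => hjBlow i (Polynomial.mem_support_iff.2 hi)
  have hBlt : ∀ i : ℕ, i < jB → b.coeff i ≠ 0 →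
      (padicValRat p (b.coeff jB) : ℚ) + jB * t < (padicValRat p (b.coeff i) : ℚ) + i * t :=
    fun i hlt hi => hjBlt i (Polynomial.mem_support_iff.2 hi) hlt
  -- attained value
  obtain ⟨hkne, hkval⟩ := gauss_attained' (p := p) a b t jA jB hjAs hjBs hAlow hAlt hBlow hBlt
  set vA : ℚ := (padicValRat p (a.coeff jA) : ℚ) + jA * t with hvA
  set vB : ℚ := (padicValRat p (b.coeff jB) : ℚ) + jB * t with hvB
  -- vA + vB ≥ m
  have hge : (m : ℚ) ≤ vA + vB := by
    have h1 : f.coeff (jA + jB) ≠ 0 := by rw [hab]; exact hkne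
    have h2 := hflow (jA + jB) h1
    have h3 : (padicValRat p (f.coeff (jA + jB)) : ℚ) =
        (padicValRat p (a.coeff jA) : ℚ) + (padicValRat p (b.coeff jB) : ℚ) := by
      rw [hab, hkval]; push_cast; ring
    rw [h3] at h2
    have h4 : ((jA + jB : ℕ) : ℚ) * t = (jA : ℚ) * t + (jB : ℚ) * t := by push_cast; ring
    rw [h4] at h2
    rw [hvA, hvB]
    linarith
  -- vA + vB ≤ m via constant coefficients
  have hA0 : vA ≤ (padicValRat p (a.coeff 0) : ℚ) := by
    have := hAlow 0 ha00
    simpa using this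
  have hB0 : vB ≤ (padicValRat p (b.coeff 0) : ℚ) := by
    have := hBlow 0 hb00
    simpa using this
  have hsum0 : (padicValRat p (a.coeff 0) : ℚ) + (padicValRat p (b.coeff 0) : ℚ) = m := by
    exact_mod_cast congrArg (Int.cast : ℤ → ℚ) hc0val
  -- vA + vB ≤ m via leading coefficients
  have hAr : vA ≤ (padicValRat p (a.coeff ra) : ℚ) + ra * t := hAlow ra hla
  have hBr : vB ≤ (padicValRat p (b.coeff rb) : ℚ) + rb * t := hBlow rb hlb
  have hsumr : (padicValRat p (a.coeff ra) : ℚ) + ra * t +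
      ((padicValRat p (b.coeff rb) : ℚ) + rb * t) = m := by
    have h1 : (padicValRat p (a.coeff ra) : ℚ) + (padicValRat p (b.coeff rb) : ℚ) = 0 := by
      exact_mod_cast congrArg (Int.cast : ℤ → ℚ) hleadval
    have h2 : (ra : ℚ) * t + (rb : ℚ) * t = (n : ℚ) * t := by
      have : (ra : ℚ) + rb = n := by exact_mod_cast hsum
      linear_combination t * this
    rw [hnt] at h2
    linarith
  -- equalities
  have heq0 : vA = (padicValRat p (a.coeff 0) : ℚ) := by linarith
  have heqr : vA = (padicValRat p (a.coeff ra) : ℚ) + ra * t := by linarith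
  -- conclude n ∣ ra * m
  have key : ((ra : ℤ) * m : ℤ) =
      (padicValRat p (a.coeff 0) - padicValRat p (a.coeff ra)) * n := by
    have hq : (padicValRat p (a.coeff 0) : ℚ) = (padicValRat p (a.coeff ra) : ℚ) + ra * t := by
      rw [← heq0, heqr]
    rw [ht] at hq
    have hq2 : ((ra : ℤ) * m : ℚ) =
        ((padicValRat p (a.coeff 0) - padicValRat p (a.coeff ra) : ℤ) : ℚ) * n := by
      push_cast
      field_simp at hq
      linarith
    exact_mod_cast hq2
  have hdvd : (n : ℤ) ∣ (ra : ℤ) * m := ⟨padicValRat p (a.coeff 0) - padicValRat p (a.coeff ra),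
    by rw [key]; ring⟩
  have hcop : IsCoprime (n : ℤ) m := by
    rw [Int.isCoprime_iff_gcd_eq_one, Int.gcd_comm]
    exact hgcd
  have hdvd2 : (n : ℤ) ∣ (ra : ℤ) := hcop.dvd_of_dvd_mul_right hdvd
  have hdvd3 : n ∣ ra := by exact_mod_cast hdvd2
  have := Nat.le_of_dvd (by omega) hdvd3
  omega
end

section
/- Let n ≥ 1 and r ≥ 0 be integers and let p be a prime divisor of n. Then the generalized Laguerre polynomial L_n^{⟨r⟩}(x) is p-Coleman integral if and only if p does not divide the binomial coefficient binomial(n+r, r). -/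
open Polynomial

/-- The generalized Laguerre polynomial `L_n^{⟨r⟩}(x) = Σ_{j=0}^n C(n-j+r, n-j) x^j / j!`. -/
noncomputable def laguerre (n r : ℕ) : Polynomial ℚ :=
  ∑ j ∈ Finset.range (n + 1),
    Polynomial.C (((n - j + r).choose (n - j) : ℚ) / (j.factorial : ℚ)) * Polynomial.X ^ j

/-- `k` is a pivotal index associated to `(n, p)`: writing `n` in base `p` as
`n = b₁ p^{e₁} + ⋯ + b_s p^{e_s}` with nonzero digits `b_i` and `e₁ > ⋯ > e_s ≥ 0`,
the pivotal indices are the partial sums `k_i = b₁ p^{e₁} + ⋯ + b_i p^{e_i}`,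
`i = 0, …, s`.  Equivalently, they are exactly the numbers `n - (n % p^e)` for `e : ℕ`. -/
def IsPivotal (p n k : ℕ) : Prop := ∃ e : ℕ, k = n - n % p ^ e

/-- `f(x) = Σ_{j=0}^n a_j x^j / j!` (so `a_j = j! ⬝ coeff j`) of degree `n` is
`p`-Coleman integral if `ord_p(a_j) ≥ 0` for all `j` (vacuous for `a_j = 0`, which has
infinite valuation) and `ord_p(a_k) = 0` (in particular `a_k ≠ 0`) for each pivotal
index `k` associated to `(n, p)`. -/
def PColemanIntegral (p : ℕ) (f : Polynomial ℚ) : Prop :=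
  (∀ j : ℕ, f.coeff j ≠ 0 → 0 ≤ padicValRat p ((j.factorial : ℚ) * f.coeff j)) ∧
  ∀ k : ℕ, IsPivotal p f.natDegree k →
    (k.factorial : ℚ) * f.coeff k ≠ 0 ∧ padicValRat p ((k.factorial : ℚ) * f.coeff k) = 0

lemma laguerre_coeff (n r j : ℕ) :
    (laguerre n r).coeff j =
      if j < n + 1 then ((n - j + r).choose (n - j) : ℚ) / (j.factorial : ℚ) else 0 := by
  simp [laguerre, Polynomial.finset_sum_coeff, Polynomial.coeff_C_mul, Polynomial.coeff_X_pow,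
    Finset.sum_ite_eq, Finset.mem_range]

lemma laguerre_natDegree (n r : ℕ) : (laguerre n r).natDegree = n := by
  apply le_antisymm
  · apply Polynomial.natDegree_sum_le_of_forall_le
    intro j hj
    refine le_trans (Polynomial.natDegree_C_mul_le _ _) ?_
    simpa [Polynomial.natDegree_X_pow] using Nat.lt_succ_iff.mp (Finset.mem_range.mp hj)
  · apply Polynomial.le_natDegree_of_ne_zero
    rw [laguerre_coeff]
    simp [Nat.factorial_ne_zero]

/-- Kummer's criterion: `p` does not divide `(a+b).choose b` iff there are no carries. -/
lemma not_dvd_choose_iff {p : ℕ} (hp : p.Prime) (a b : ℕ) :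
    ¬ p ∣ (a + b).choose b ↔ ∀ i, b % p ^ i + a % p ^ i < p ^ i := by
  rw [← emultiplicity_eq_zero,
    Nat.Prime.emultiplicity_choose' hp (lt_add_one (Nat.log p (a + b)))]
  simp only [Nat.cast_eq_zero, Finset.card_eq_zero, Finset.filter_eq_empty_iff,
    Finset.mem_Ico, not_le]
  constructor
  · intro h i
    rcases Nat.eq_zero_or_pos i with rfl | hi
    · simp [Nat.mod_one]
    by_cases hib : i < Nat.log p (a + b) + 1
    · exact h ⟨hi, hib⟩
    · -- i > log, so p ^ i > a + b
      have hab : a + b < p ^ i := by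
        rcases Nat.eq_zero_or_pos (a + b) with h0 | h0
        · obtain ⟨rfl, rfl⟩ := Nat.add_eq_zero.mp h0
          simpa using pow_pos hp.pos i
        · exact (Nat.log_lt_iff_lt_pow hp.one_lt h0.ne').mp (by omega)
      calc b % p ^ i + a % p ^ i ≤ b + a := by
            exact Nat.add_le_add (Nat.mod_le _ _) (Nat.mod_le _ _)
        _ < p ^ i := by omega
  · intro h i _
    exact h i

theorem laguerre_pColemanIntegral_iff (n r : ℕ) (hn : 1 ≤ n)
    (p : ℕ) (hp : p.Prime) (hpn : p ∣ n) :
    PColemanIntegral p (laguerre n r) ↔ ¬ p ∣ (n + r).choose r := by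
  have hdeg := laguerre_natDegree n r
  have hval : ∀ k : ℕ, k ≤ n →
      (k.factorial : ℚ) * (laguerre n r).coeff k = ((n - k + r).choose (n - k) : ℚ) := by
    intro k hk
    rw [laguerre_coeff, if_pos (by omega), mul_div_cancel₀]
    exact Nat.cast_ne_zero.mpr (Nat.factorial_ne_zero k)
  constructor
  · rintro ⟨-, h2⟩
    have hpiv : IsPivotal p (laguerre n r).natDegree 0 := by
      refine ⟨n, ?_⟩
      rw [hdeg, Nat.mod_eq_of_lt (Nat.lt_pow_self (n := n) hp.one_lt), Nat.sub_self]
    obtain ⟨-, hv⟩ := h2 0 hpiv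
    rw [hval 0 (Nat.zero_le n)] at hv
    simp only [Nat.sub_zero] at hv
    rw [padicValRat.of_nat, Nat.cast_eq_zero] at hv
    have hne : (n + r).choose n ≠ 0 := Nat.choose_pos (Nat.le_add_right n r) |>.ne'
    have : ¬ p ∣ (n + r).choose n := by
      intro hd
      rcases (padicValNat.eq_zero_iff).mp hv with h | h | h
      · exact hp.one_lt.ne' h
      · exact hne h
      · exact h hd
    rwa [show (n + r).choose n = (n + r).choose r by
      have := Nat.choose_symm (Nat.le_add_left r n)
      simpa using this] at this
  · intro hnd
    have hcarry : ∀ i, r % p ^ i + n % p ^ i < p ^ i :=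
      (not_dvd_choose_iff hp n r).mp hnd
    constructor
    · intro j hj
      by_cases hjn : j ≤ n
      · rw [hval j hjn, padicValRat.of_nat]
        exact_mod_cast Int.ofNat_nonneg _
      · rw [laguerre_coeff, if_neg (by omega)] at hj
        exact absurd rfl hj
    · rintro k ⟨e, hk⟩
      rw [hdeg] at hk
      have hmn := Nat.mod_le n (p ^ e)
      have hkn : k ≤ n := hk ▸ Nat.sub_le n _
      have hnk : n - k = n % p ^ e := by omega
      set m := n % p ^ e with hm
      have hmle : ∀ i, m % p ^ i ≤ n % p ^ i := by
        intro i
        rcases le_total i e with hie | hie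
        · rw [hm, Nat.mod_mod_of_dvd _ (pow_dvd_pow p hie)]
        · have : m < p ^ i := lt_of_lt_of_le (Nat.mod_lt _ (pow_pos hp.pos e)) (pow_le_pow_right₀ hp.one_lt.le hie)
          rw [Nat.mod_eq_of_lt this]
          calc m = (n % p ^ i) % p ^ e := by rw [hm, Nat.mod_mod_of_dvd _ (pow_dvd_pow p hie)]
            _ ≤ n % p ^ i := Nat.mod_le _ _
      have hnd' : ¬ p ∣ (r + m).choose m := by
        rw [not_dvd_choose_iff hp r m]
        intro i
        calc m % p ^ i + r % p ^ i ≤ n % p ^ i + r % p ^ i :=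
              Nat.add_le_add_right (hmle i) _
          _ < p ^ i := by have := hcarry i; omega
      rw [hval k hkn, hnk]
      have hne : (m + r).choose m ≠ 0 := (Nat.choose_pos (Nat.le_add_right m r)).ne'
      rw [add_comm r m] at hnd'
      refine ⟨Nat.cast_ne_zero.mpr hne, ?_⟩
      rw [padicValRat.of_nat, Nat.cast_eq_zero]
      exact padicValNat.eq_zero_of_not_dvd hnd'
end

section
/- Let n and r be nonnegative integers with n + r ≥ 48 and n ≥ 8 + 5r/3. Then there exists a prime number p with (n+r)/2 < p < n - 2. -/
set_option maxHeartbeats 1000000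
open Real Nat Finset


noncomputable def phi (x : ℝ) : ℝ := x * Real.log x - x

lemma log_ge_one_sub_inv {x : ℝ} (hx : 0 < x) : 1 - 1/x ≤ Real.log x := by
  have h := Real.log_le_sub_one_of_pos (x := 1/x) (by positivity)
  rw [Real.log_div one_ne_zero (ne_of_gt hx), Real.log_one] at h
  linarith

lemma stirling_low_aux : ∀ n : ℕ, 1 ≤ n → phi n + 1 ≤ Real.log (n ! : ℝ) := by
  intro n
  induction n with
  | zero => intro h; omega
  | succ m ih =>
    intro _
    rcases Nat.eq_zero_or_pos m with hm | hm
    · subst hm; simp [phi, Nat.factorial]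
    · have hm1 : (1:ℝ) ≤ m := by exact_mod_cast hm
      have hml : Real.log ((m+1 : ℕ) ! : ℝ) = Real.log (m ! : ℝ) + Real.log (m+1 : ℝ) := by
        rw [Nat.factorial_succ, Nat.cast_mul, Real.log_mul (by positivity) (by positivity)]
        push_cast; ring
      have key : (m:ℝ) * (Real.log (m+1) - Real.log m) ≤ 1 := by
        have h1 : Real.log ((m+1)/m) ≤ (m+1)/m - 1 :=
          Real.log_le_sub_one_of_pos (by positivity)
        rw [Real.log_div (by positivity) (by positivity)] at h1
        have : (m+1)/(m:ℝ) - 1 = 1/m := by field_simp; ring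
        rw [this] at h1
        calc (m:ℝ) * (Real.log (m+1) - Real.log m) ≤ (m:ℝ) * (1/m) := by
              apply mul_le_mul_of_nonneg_left h1 (by positivity)
          _ = 1 := by field_simp
      have := ih hm
      rw [hml]
      push_cast
      simp only [phi] at *
      push_cast at *
      nlinarith [Real.log_nonneg (by linarith : (1:ℝ) ≤ (m:ℝ)+1)]

lemma stirling_high_aux : ∀ n : ℕ, 1 ≤ n → Real.log (n ! : ℝ) ≤ phi n + 1 + Real.log n := by
  intro n
  induction n with
  | zero => intro h; omega
  | succ m ih =>
    intro _
    rcases Nat.eq_zero_or_pos m with hm | hm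
    · subst hm; simp [phi, Nat.factorial]
    · have hm1 : (1:ℝ) ≤ m := by exact_mod_cast hm
      have hml : Real.log ((m+1 : ℕ) ! : ℝ) = Real.log (m ! : ℝ) + Real.log (m+1 : ℝ) := by
        rw [Nat.factorial_succ, Nat.cast_mul, Real.log_mul (by positivity) (by positivity)]
        push_cast; ring
      have key : 1 ≤ ((m:ℝ)+1) * (Real.log (m+1) - Real.log m) := by
        have h1 : 1 - 1/((m+1)/m : ℝ) ≤ Real.log ((m+1)/m) :=
          log_ge_one_sub_inv (by positivity)
        rw [Real.log_div (by positivity) (by positivity)] at h1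
        have h2 : 1 - 1/(((m:ℝ)+1)/m) = 1/(m+1) := by
          rw [one_div_div]; field_simp; ring
        rw [h2] at h1
        calc (1:ℝ) = ((m:ℝ)+1) * (1/(m+1)) := by field_simp
          _ ≤ ((m:ℝ)+1) * (Real.log (m+1) - Real.log m) := by
              apply mul_le_mul_of_nonneg_left h1 (by positivity)
      have := ih hm
      rw [hml]
      push_cast
      simp only [phi] at *
      push_cast at *
      nlinarith [Real.log_nonneg (by linarith : (1:ℝ) ≤ (m:ℝ)+1)]


lemma phi_slip_high {x y : ℝ} (hx : 1 ≤ x) (hxy : x ≤ y) :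
    phi y - phi x ≤ (y - x) * Real.log y := by
  -- x log(y/x) ≤ y - x
  have hx0 : (0:ℝ) < x := by linarith
  have hy0 : (0:ℝ) < y := by linarith
  have h1 : Real.log (y/x) ≤ y/x - 1 := Real.log_le_sub_one_of_pos (by positivity)
  rw [Real.log_div (ne_of_gt hy0) (ne_of_gt hx0)] at h1
  have h2 : x * (Real.log y - Real.log x) ≤ y - x := by
    have := mul_le_mul_of_nonneg_left h1 (le_of_lt hx0)
    calc x * (Real.log y - Real.log x) ≤ x * (y/x - 1) := this
      _ = y - x := by field_simp
  simp only [phi]; nlinarith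

lemma phi_slip_low {x y : ℝ} (hx : 1 ≤ x) (hxy : x ≤ y) :
    (y - x) * Real.log x ≤ phi y - phi x := by
  have hx0 : (0:ℝ) < x := by linarith
  have hy0 : (0:ℝ) < y := by linarith
  have h1 : 1 - 1/(y/x) ≤ Real.log (y/x) := log_ge_one_sub_inv (by positivity)
  rw [Real.log_div (ne_of_gt hy0) (ne_of_gt hx0), one_div_div] at h1
  have h2 : y - x ≤ y * (Real.log y - Real.log x) := by
    have := mul_le_mul_of_nonneg_left h1 (le_of_lt hy0)
    calc y - x = y * (1 - x/y) := by field_simp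
      _ ≤ y * (Real.log y - Real.log x) := this
  simp only [phi]; nlinarith [Real.log_nonneg hx]

lemma phi_mono {x y : ℝ} (hx : 1 ≤ x) (hxy : x ≤ y) : phi x ≤ phi y := by
  have := phi_slip_low hx hxy
  nlinarith [Real.log_nonneg hx]
noncomputable def Ac : ℝ := (7/15) * Real.log 2 + (3/10) * Real.log 3 + (1/6) * Real.log 5

lemma phi_main {x : ℝ} (hx : 0 < x) :
    phi x - phi (x/2) - phi (x/3) - phi (x/5) + phi (x/30) = Ac * x := by
  have l2 : Real.log (x/2) = Real.log x - Real.log 2 := Real.log_div (ne_of_gt hx) (by norm_num)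
  have l3 : Real.log (x/3) = Real.log x - Real.log 3 := Real.log_div (ne_of_gt hx) (by norm_num)
  have l5 : Real.log (x/5) = Real.log x - Real.log 5 := Real.log_div (ne_of_gt hx) (by norm_num)
  have l30 : Real.log (x/30) = Real.log x - (Real.log 2 + Real.log 3 + Real.log 5) := by
    rw [Real.log_div (ne_of_gt hx) (by norm_num)]
    have : (30:ℝ) = 2*3*5 := by norm_num
    rw [this, Real.log_mul (by norm_num) (by norm_num), Real.log_mul (by norm_num) (by norm_num)]
  simp only [phi, l2, l3, l5, l30, Ac]
  ring

noncomputable def Lf (M : ℕ) : ℝ := Real.log (M ! : ℝ)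
lemma stirling_low (n : ℕ) (h : 1 ≤ n) : phi n + 1 ≤ Lf n := stirling_low_aux n h
lemma stirling_high (n : ℕ) (h : 1 ≤ n) : Lf n ≤ phi n + 1 + Real.log n := stirling_high_aux n h

lemma logfact_sum {M N : ℕ} (h : M ≤ N) :
    Lf M = ∑ p ∈ (N+1).primesBelow, ((M !).factorization p : ℝ) * Real.log p := by
  have h0 : (M !) ≠ 0 := Nat.factorial_ne_zero M
  have key : Lf M = ∑ p ∈ (M !).factorization.support,
      ((M !).factorization p : ℝ) * Real.log p := by
    conv_lhs => rw [Lf, ← Nat.factorization_prod_pow_eq_self h0]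
    rw [Finsupp.prod]
    push_cast
    rw [Real.log_prod]
    · apply Finset.sum_congr rfl
      intro p hp
      rw [Real.log_pow]
    · intro p hp
      have hp' : p.Prime := Nat.prime_of_mem_primeFactors (by
        rwa [Nat.support_factorization] at hp)
      exact pow_ne_zero _ (by exact_mod_cast hp'.pos.ne')
  rw [key]
  apply Finset.sum_subset
  · intro p hp
    rw [Nat.support_factorization] at hp
    have hp' : p.Prime := Nat.prime_of_mem_primeFactors hp
    have hdvd : p ∣ M ! := Nat.dvd_of_mem_primeFactors hp
    have hle : p ≤ M := (Nat.Prime.dvd_factorial hp').mp hdvd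
    exact Nat.mem_primesBelow.mpr ⟨by omega, hp'⟩
  · intro p _ hp
    rw [Finsupp.notMem_support_iff.mp hp]
    simp

def gZ (m : ℕ) : ℤ := (m : ℤ) - (m/2 : ℕ) - (m/3 : ℕ) - (m/5 : ℕ) + (m/30 : ℕ)

def cp (N p : ℕ) : ℤ := ∑ i ∈ Finset.Ico 1 (Nat.log p N + 1), gZ (N / p^i)
lemma gZ_nonneg (m : ℕ) : 0 ≤ gZ m := by unfold gZ; omega
lemma gZ_le_one (m : ℕ) : gZ m ≤ 1 := by unfold gZ; omega
lemma gZ_eq_one {m : ℕ} (h1 : 1 ≤ m) (h5 : m ≤ 5) : gZ m = 1 := by unfold gZ; omega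
noncomputable def psi (N : ℕ) : ℝ :=
  ∑ p ∈ (N+1).primesBelow, (Nat.log p N : ℝ) * Real.log p
noncomputable def Sc (N : ℕ) : ℝ := Lf N - Lf (N/2) - Lf (N/3) - Lf (N/5) + Lf (N/30)

lemma fact_div_factorization {N d : ℕ} {p : ℕ} (hp : p.Prime) (hd : 1 ≤ d) :
    (((N/d) !).factorization p : ℤ) = ∑ i ∈ Finset.Ico 1 (Nat.log p N + 1), ((N/d) / p^i : ℕ) := by
  haveI : Fact p.Prime := ⟨hp⟩
  rw [Nat.factorization_def _ hp, padicValNat_factorial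
    (lt_of_le_of_lt (Nat.log_mono_right (Nat.div_le_self N d)) (Nat.lt_succ_self _))]

lemma cp_eq {N p : ℕ} (hp : p.Prime) :
    ((N !).factorization p : ℤ) - ((N/2) !).factorization p - ((N/3) !).factorization p
      - ((N/5) !).factorization p + ((N/30) !).factorization p = cp N p := by
  have h1 := fact_div_factorization (N := N) (d := 1) hp le_rfl
  rw [Nat.div_one] at h1
  rw [h1, fact_div_factorization hp (by norm_num : (1:ℕ) ≤ 2),
    fact_div_factorization hp (by norm_num : (1:ℕ) ≤ 3),
    fact_div_factorization hp (by norm_num : (1:ℕ) ≤ 5),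
    fact_div_factorization hp (by norm_num : (1:ℕ) ≤ 30), cp]
  simp only [Nat.cast_sum]
  rw [← Finset.sum_sub_distrib, ← Finset.sum_sub_distrib, ← Finset.sum_sub_distrib,
    ← Finset.sum_add_distrib]
  apply Finset.sum_congr rfl
  intro i _
  have e2 : N/2/p^i = (N/p^i)/2 := by rw [Nat.div_div_eq_div_mul, Nat.div_div_eq_div_mul, mul_comm]
  have e3 : N/3/p^i = (N/p^i)/3 := by rw [Nat.div_div_eq_div_mul, Nat.div_div_eq_div_mul, mul_comm]
  have e5 : N/5/p^i = (N/p^i)/5 := by rw [Nat.div_div_eq_div_mul, Nat.div_div_eq_div_mul, mul_comm]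
  have e30 : N/30/p^i = (N/p^i)/30 := by
    rw [Nat.div_div_eq_div_mul, Nat.div_div_eq_div_mul, mul_comm]
  rw [e2, e3, e5, e30, gZ]


lemma cp_nonneg (N p : ℕ) : 0 ≤ cp N p :=
  Finset.sum_nonneg fun i _ => gZ_nonneg _

lemma cp_le_log (N p : ℕ) : cp N p ≤ (Nat.log p N : ℤ) := by
  calc cp N p ≤ ∑ _i ∈ Finset.Ico 1 (Nat.log p N + 1), (1:ℤ) :=
        Finset.sum_le_sum fun i _ => gZ_le_one _
    _ = (Nat.log p N : ℤ) := by simp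

lemma cp_ge {N p : ℕ} (hp : 1 < p) (hN : N ≠ 0) :
    (Nat.log p N : ℤ) - (Nat.log p (N/6) : ℤ) ≤ cp N p := by
  set L := Nat.log p N with hL
  set L6 := Nat.log p (N/6) with hL6
  have hL6L : L6 ≤ L := Nat.log_mono_right (Nat.div_le_self N 6)
  have hsplit : Finset.Ico 1 (L+1) = Finset.Ico 1 (L6+1) ∪ Finset.Ico (L6+1) (L+1) := by
    rw [Finset.Ico_union_Ico_eq_Ico] <;> omega
  have hdisj : Disjoint (Finset.Ico 1 (L6+1)) (Finset.Ico (L6+1) (L+1)) := by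
    apply Finset.Ico_disjoint_Ico_consecutive
  rw [cp, ← hL, hsplit, Finset.sum_union hdisj]
  have h1 : (0:ℤ) ≤ ∑ i ∈ Finset.Ico 1 (L6+1), gZ (N / p^i) :=
    Finset.sum_nonneg fun i _ => gZ_nonneg _
  have h2 : ∑ i ∈ Finset.Ico (L6+1) (L+1), gZ (N / p^i)
      = ∑ _i ∈ Finset.Ico (L6+1) (L+1), (1:ℤ) := by
    apply Finset.sum_congr rfl
    intro i hi
    rw [Finset.mem_Ico] at hi
    have hiL : i ≤ L := by omega
    have hpow_le : p ^ i ≤ N := (Nat.le_log_iff_pow_le hp hN).mp hiL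
    have hge1 : 1 ≤ N / p^i := (Nat.one_le_div_iff (by positivity)).mpr hpow_le
    have hgt : N/6 < p ^ i := by
      by_contra hc
      push_neg at hc
      have hN6 : N/6 ≠ 0 := by
        intro h0; rw [h0] at hc; exact absurd (Nat.le_zero.mp hc) (by positivity)
      have := (Nat.le_log_iff_pow_le hp hN6).mpr hc
      omega
    have hle5 : N / p^i ≤ 5 := by
      by_contra hc
      push_neg at hc
      have h6 : 6 ≤ N / p^i := hc
      have := (Nat.le_div_iff_mul_le (by positivity : 0 < p^i)).mp h6
      have : p ^ i ≤ N / 6 := (Nat.le_div_iff_mul_le (by norm_num)).mpr (by omega)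
      omega
    exact gZ_eq_one hge1 hle5
  rw [h2]
  simp only [Finset.sum_const, Nat.card_Ico, nsmul_eq_mul, mul_one]
  push_cast
  omega



lemma log_p_nonneg {p k : ℕ} (hp : p ∈ k.primesBelow) : 0 ≤ Real.log p :=
  Real.log_nonneg (by exact_mod_cast (Nat.prime_of_mem_primesBelow hp).one_lt.le)

lemma Sc_eq (N : ℕ) : Sc N = ∑ p ∈ (N+1).primesBelow, (cp N p : ℝ) * Real.log p := by
  rw [Sc, logfact_sum (le_refl N), logfact_sum (Nat.div_le_self N 2),
    logfact_sum (Nat.div_le_self N 3), logfact_sum (Nat.div_le_self N 5),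
    logfact_sum (Nat.div_le_self N 30), ← Finset.sum_sub_distrib, ← Finset.sum_sub_distrib,
    ← Finset.sum_sub_distrib, ← Finset.sum_add_distrib]
  apply Finset.sum_congr rfl
  intro p hp
  have hpp := Nat.prime_of_mem_primesBelow hp
  have h := cp_eq (N := N) hpp
  have h' : ((N !).factorization p : ℝ) - ((N/2) !).factorization p
      - ((N/3) !).factorization p - ((N/5) !).factorization p
      + ((N/30) !).factorization p = (cp N p : ℝ) := by exact_mod_cast h
  rw [← h']; ring

lemma Sc_le_psi (N : ℕ) : Sc N ≤ psi N := by
  rw [Sc_eq, psi]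
  apply Finset.sum_le_sum
  intro p hp
  have h : (cp N p : ℝ) ≤ (Nat.log p N : ℝ) := by exact_mod_cast cp_le_log N p
  exact mul_le_mul_of_nonneg_right h (log_p_nonneg hp)

lemma psi_le_Sc_add (N : ℕ) (hN : N ≠ 0) : psi N ≤ Sc N + psi (N/6) := by
  have hrw : psi (N/6) = ∑ p ∈ (N+1).primesBelow, (Nat.log p (N/6) : ℝ) * Real.log p := by
    rw [psi]
    apply Finset.sum_subset
    · intro p hp
      have := Nat.mem_primesBelow.mp hp
      exact Nat.mem_primesBelow.mpr ⟨by
        have := Nat.div_le_self N 6; omega, this.2⟩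
    · intro p hp hnot
      have hpp := Nat.prime_of_mem_primesBelow hp
      have : ¬ p < N/6 + 1 := fun hlt => hnot (Nat.mem_primesBelow.mpr ⟨hlt, hpp⟩)
      have hlog : Nat.log p (N/6) = 0 := Nat.log_eq_zero_iff.mpr (Or.inl (by omega))
      rw [hlog]; simp
  rw [hrw, Sc_eq, ← Finset.sum_add_distrib]
  apply Finset.sum_le_sum
  intro p hp
  have hpp := Nat.prime_of_mem_primesBelow hp
  have h : (Nat.log p N : ℝ) ≤ (cp N p : ℝ) + (Nat.log p (N/6) : ℝ) := by
    have := cp_ge (N := N) hpp.one_lt hN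
    push_cast
    exact_mod_cast by linarith [this]
  calc (Nat.log p N : ℝ) * Real.log p
      ≤ ((cp N p : ℝ) + (Nat.log p (N/6) : ℝ)) * Real.log p :=
        mul_le_mul_of_nonneg_right h (log_p_nonneg hp)
    _ = (cp N p : ℝ) * Real.log p + (Nat.log p (N/6) : ℝ) * Real.log p := by ring

lemma psi_le_Lf (N : ℕ) : psi N ≤ Lf N := by
  rw [logfact_sum (le_refl N), psi]
  apply Finset.sum_le_sum
  intro p hp
  have hpp := Nat.prime_of_mem_primesBelow hp
  have hpN : p < N + 1 := Nat.lt_of_mem_primesBelow hp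
  have hN : N ≠ 0 := by have := hpp.two_le; omega
  have key : Nat.log p N ≤ (N !).factorization p := by
    haveI : Fact p.Prime := ⟨hpp⟩
    rw [Nat.factorization_def _ hpp, padicValNat_factorial (Nat.lt_succ_self _)]
    calc Nat.log p N = ∑ _i ∈ Finset.Ico 1 (Nat.log p N + 1), 1 := by simp
      _ ≤ ∑ i ∈ Finset.Ico 1 (Nat.log p N + 1), N / p^i := by
          apply Finset.sum_le_sum
          intro i hi
          rw [Finset.mem_Ico] at hi
          have : p ^ i ≤ N := (Nat.le_log_iff_pow_le hpp.one_lt hN).mp (by omega)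
          exact (Nat.one_le_div_iff (pow_pos hpp.pos i)).mpr this
  exact mul_le_mul_of_nonneg_right (by exact_mod_cast key) (log_p_nonneg hp)



-- numeric bounds
lemma log2_lb : (0.6931471803 : ℝ) ≤ Real.log 2 := le_of_lt Real.log_two_gt_d9
lemma log2_ub : Real.log 2 ≤ (0.6931471808 : ℝ) := le_of_lt Real.log_two_lt_d9
lemma log3_lb : (1.0974 : ℝ) ≤ Real.log 3 := by
  have h : (2:ℝ)^19 ≤ 3^12 := by norm_num
  have := Real.log_le_log (by positivity) h
  rw [Real.log_pow, Real.log_pow] at this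
  push_cast at this
  nlinarith [log2_lb]
lemma log3_ub : Real.log 3 ≤ (1.0989 : ℝ) := by
  have h : (3:ℝ)^41 ≤ 2^65 := by norm_num
  have := Real.log_le_log (by positivity) h
  rw [Real.log_pow, Real.log_pow] at this
  push_cast at this
  nlinarith [log2_ub]
lemma log5_lb : (1.5995 : ℝ) ≤ Real.log 5 := by
  have h : (2:ℝ)^30 ≤ 5^13 := by norm_num
  have := Real.log_le_log (by positivity) h
  rw [Real.log_pow, Real.log_pow] at this
  push_cast at this
  nlinarith [log2_lb]
lemma log5_ub : Real.log 5 ≤ (1.6096 : ℝ) := by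
  have h : (5:ℝ)^59 ≤ 2^137 := by norm_num
  have := Real.log_le_log (by positivity) h
  rw [Real.log_pow, Real.log_pow] at this
  push_cast at this
  nlinarith [log2_ub]
lemma Ac_lb : (0.919 : ℝ) ≤ Ac := by
  rw [Ac]; nlinarith [log2_lb, log3_lb, log5_lb]
lemma log30_lb : (3.39:ℝ) ≤ Real.log 30 := by
  have h : (30:ℝ) = 2*3*5 := by norm_num
  rw [h, Real.log_mul (by norm_num) (by norm_num), Real.log_mul (by norm_num) (by norm_num)]
  linarith [log2_lb, log3_lb, log5_lb]
lemma log6_lb : (1.79:ℝ) ≤ Real.log 6 := by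
  have h : (6:ℝ) = 2*3 := by norm_num
  rw [h, Real.log_mul (by norm_num) (by norm_num)]
  linarith [log2_lb, log3_lb]
lemma log6_ub : Real.log 6 ≤ (1.7921:ℝ) := by
  have h : (6:ℝ) = 2*3 := by norm_num
  rw [h, Real.log_mul (by norm_num) (by norm_num)]
  linarith [log2_ub, log3_ub]
lemma Ac_nonneg : (0 : ℝ) ≤ Ac := by linarith [Ac_lb]

-- floor div bounds as reals
lemma div_cast_le (N d : ℕ) (hd : 0 < d) : ((N/d : ℕ) : ℝ) ≤ (N : ℝ)/d := by
  rw [le_div_iff₀ (by exact_mod_cast hd)]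
  exact_mod_cast Nat.div_mul_le_self N d
lemma div_cast_ge (N d : ℕ) (hd : 0 < d) : (N : ℝ)/d - 1 ≤ ((N/d : ℕ) : ℝ) := by
  have h : N ≤ d * (N/d) + d := by
    have := Nat.div_add_mod N d
    have := Nat.mod_lt N hd
    omega
  have h' : (N:ℝ) ≤ d * (N/d : ℕ) + d := by exact_mod_cast h
  have hd' : (0:ℝ) < d := by exact_mod_cast hd
  rw [sub_le_iff_le_add, div_le_iff₀ hd']
  nlinarith

lemma log_cast_le {a : ℕ} {x : ℝ} (ha : 1 ≤ a) (h : (a:ℝ) ≤ x) : Real.log a ≤ Real.log x :=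
  Real.log_le_log (by exact_mod_cast ha) h

lemma Sc_bounds {N : ℕ} (hN : 30 ≤ N) :
    Ac * N - 5 * Real.log N ≤ Sc N ∧ Sc N ≤ Ac * N + 5 * Real.log N := by
  set x : ℝ := (N : ℝ) with hx
  have hx30 : (30:ℝ) ≤ x := by rw [hx]; exact_mod_cast hN
  have hxpos : (0:ℝ) < x := by linarith
  have lx_nonneg : 0 ≤ Real.log x := Real.log_nonneg (by linarith)
  have lx1 : (1:ℝ) ≤ Real.log x := by
    have h30 := log30_lb
    have : Real.log 30 ≤ Real.log x := Real.log_le_log (by norm_num) hx30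
    linarith
  have main := phi_main hxpos
  -- nat divs
  have h2n : 1 ≤ N/2 := by omega
  have h3n : 1 ≤ N/3 := by omega
  have h5n : 1 ≤ N/5 := by omega
  have h30n : 1 ≤ N/30 := by omega
  have c2 : ((N/2 : ℕ) : ℝ) ≤ x/2 := div_cast_le N 2 (by norm_num)
  have c3 : ((N/3 : ℕ) : ℝ) ≤ x/3 := div_cast_le N 3 (by norm_num)
  have c5 : ((N/5 : ℕ) : ℝ) ≤ x/5 := div_cast_le N 5 (by norm_num)
  have c30 : ((N/30 : ℕ) : ℝ) ≤ x/30 := div_cast_le N 30 (by norm_num)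
  have d2 : x/2 - 1 ≤ ((N/2 : ℕ) : ℝ) := div_cast_ge N 2 (by norm_num)
  have d3 : x/3 - 1 ≤ ((N/3 : ℕ) : ℝ) := div_cast_ge N 3 (by norm_num)
  have d5 : x/5 - 1 ≤ ((N/5 : ℕ) : ℝ) := div_cast_ge N 5 (by norm_num)
  have d30 : x/30 - 1 ≤ ((N/30 : ℕ) : ℝ) := div_cast_ge N 30 (by norm_num)
  have e2 : (1:ℝ) ≤ ((N/2 : ℕ) : ℝ) := by exact_mod_cast h2n
  have e3 : (1:ℝ) ≤ ((N/3 : ℕ) : ℝ) := by exact_mod_cast h3n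
  have e5 : (1:ℝ) ≤ ((N/5 : ℕ) : ℝ) := by exact_mod_cast h5n
  have e30 : (1:ℝ) ≤ ((N/30 : ℕ) : ℝ) := by exact_mod_cast h30n
  -- stirling
  have sl := stirling_low N (by omega)
  have sh := stirling_high N (by omega)
  have sl2 := stirling_low (N/2) h2n
  have sh2 := stirling_high (N/2) h2n
  have sl3 := stirling_low (N/3) h3n
  have sh3 := stirling_high (N/3) h3n
  have sl5 := stirling_low (N/5) h5n
  have sh5 := stirling_high (N/5) h5n
  have sl30 := stirling_low (N/30) h30n
  have sh30 := stirling_high (N/30) h30n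
  -- log of divs ≤ log x
  have lg2 : Real.log ((N/2 : ℕ) : ℝ) ≤ Real.log x :=
    Real.log_le_log (by linarith) (by calc ((N/2:ℕ):ℝ) ≤ x/2 := c2
                                        _ ≤ x := by linarith)
  have lg3 : Real.log ((N/3 : ℕ) : ℝ) ≤ Real.log x :=
    Real.log_le_log (by linarith) (by calc ((N/3:ℕ):ℝ) ≤ x/3 := c3
                                        _ ≤ x := by linarith)
  have lg5 : Real.log ((N/5 : ℕ) : ℝ) ≤ Real.log x :=
    Real.log_le_log (by linarith) (by calc ((N/5:ℕ):ℝ) ≤ x/5 := c5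
                                        _ ≤ x := by linarith)
  have lg30 : Real.log ((N/30 : ℕ) : ℝ) ≤ Real.log x :=
    Real.log_le_log (by linarith) (by calc ((N/30:ℕ):ℝ) ≤ x/30 := c30
                                        _ ≤ x := by linarith)
  -- phi monotonicity/slip facts
  have m2 : phi ((N/2 : ℕ) : ℝ) ≤ phi (x/2) := phi_mono e2 c2
  have m3 : phi ((N/3 : ℕ) : ℝ) ≤ phi (x/3) := phi_mono e3 c3
  have m5 : phi ((N/5 : ℕ) : ℝ) ≤ phi (x/5) := phi_mono e5 c5
  have m30 : phi ((N/30 : ℕ) : ℝ) ≤ phi (x/30) := phi_mono e30 c30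
  have s2 : phi (x/2) - phi ((N/2 : ℕ) : ℝ) ≤ Real.log x := by
    have hs := phi_slip_high e2 c2
    have hl : Real.log (x/2) ≤ Real.log x := Real.log_le_log (by linarith) (by linarith)
    have hl0 : 0 ≤ Real.log (x/2) := Real.log_nonneg (by linarith)
    have hprod : (x/2 - ((N/2 : ℕ) : ℝ)) * Real.log (x/2) ≤ 1 * Real.log x :=
      mul_le_mul (by linarith) hl hl0 (by norm_num)
    linarith
  have s3 : phi (x/3) - phi ((N/3 : ℕ) : ℝ) ≤ Real.log x := by
    have hs := phi_slip_high e3 c3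
    have hl : Real.log (x/3) ≤ Real.log x := Real.log_le_log (by linarith) (by linarith)
    have hl0 : 0 ≤ Real.log (x/3) := Real.log_nonneg (by linarith)
    have hprod : (x/3 - ((N/3 : ℕ) : ℝ)) * Real.log (x/3) ≤ 1 * Real.log x :=
      mul_le_mul (by linarith) hl hl0 (by norm_num)
    linarith
  have s5 : phi (x/5) - phi ((N/5 : ℕ) : ℝ) ≤ Real.log x := by
    have hs := phi_slip_high e5 c5
    have hl : Real.log (x/5) ≤ Real.log x := Real.log_le_log (by linarith) (by linarith)
    have hl0 : 0 ≤ Real.log (x/5) := Real.log_nonneg (by linarith)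
    have hprod : (x/5 - ((N/5 : ℕ) : ℝ)) * Real.log (x/5) ≤ 1 * Real.log x :=
      mul_le_mul (by linarith) hl hl0 (by norm_num)
    linarith
  have s30 : phi (x/30) - phi ((N/30 : ℕ) : ℝ) ≤ Real.log x := by
    have hs := phi_slip_high e30 c30
    have hl : Real.log (x/30) ≤ Real.log x := Real.log_le_log (by linarith) (by linarith)
    have hl0 : 0 ≤ Real.log (x/30) := Real.log_nonneg (by linarith)
    have hprod : (x/30 - ((N/30 : ℕ) : ℝ)) * Real.log (x/30) ≤ 1 * Real.log x :=
      mul_le_mul (by linarith) hl hl0 (by norm_num)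
    linarith
  constructor
  · -- lower bound
    have : Sc N ≥ (phi x + 1) - (phi (x/2) + 1 + Real.log x) - (phi (x/3) + 1 + Real.log x)
        - (phi (x/5) + 1 + Real.log x) + (phi (x/30) - Real.log x + 1) := by
      rw [Sc]
      have u2 : Lf (N/2) ≤ phi (x/2) + 1 + Real.log x := by linarith
      have u3 : Lf (N/3) ≤ phi (x/3) + 1 + Real.log x := by linarith
      have u5 : Lf (N/5) ≤ phi (x/5) + 1 + Real.log x := by linarith
      have u30 : Lf (N/30) ≥ phi (x/30) - Real.log x + 1 := by linarith
      linarith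
    linarith
  · -- upper bound
    have : Sc N ≤ (phi x + 1 + Real.log x) - (phi (x/2) - Real.log x + 1)
        - (phi (x/3) - Real.log x + 1) - (phi (x/5) - Real.log x + 1)
        + (phi (x/30) + 1 + Real.log x) := by
      rw [Sc]
      have u2 : Lf (N/2) ≥ phi (x/2) - Real.log x + 1 := by linarith
      have u3 : Lf (N/3) ≥ phi (x/3) - Real.log x + 1 := by linarith
      have u5 : Lf (N/5) ≥ phi (x/5) - Real.log x + 1 := by linarith
      have u30 : Lf (N/30) ≤ phi (x/30) + 1 + Real.log x := by linarith
      linarith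
    linarith


theorem psi_upper : ∀ N : ℕ, psi N ≤ (6/5) * Ac * N + 2 * (Real.log N)^2 + 110 := by
  intro N
  induction N using Nat.strong_induction_on with
  | _ N ih =>
    rcases lt_or_ge N 30 with hN | hN
    · have h1 : psi N ≤ Lf N := psi_le_Lf N
      have h2 : Lf N ≤ 110 := by
        rcases Nat.eq_zero_or_pos N with h0 | h0
        · subst h0; simp [Lf, Nat.factorial]
        · have hst := stirling_high N h0
          have hN32 : (N:ℝ) ≤ 32 := by exact_mod_cast (by omega : N ≤ 32)
          have hN1 : (1:ℝ) ≤ (N:ℝ) := by exact_mod_cast h0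
          have hlN : Real.log N ≤ 3.4658 := by
            have h32 : Real.log (N:ℝ) ≤ Real.log 32 := Real.log_le_log (by linarith) hN32
            have : Real.log (32:ℝ) = 5 * Real.log 2 := by
              rw [show (32:ℝ) = 2^5 by norm_num, Real.log_pow]; push_cast; ring
            nlinarith [log2_ub]
          have hlNn : 0 ≤ Real.log N := Real.log_nonneg hN1
          have hN29 : (N:ℝ) ≤ 29 := by exact_mod_cast (by omega : N ≤ 29)
          have : phi N = (N:ℝ) * Real.log N - N := rfl
          nlinarith [hst]
      have h3 : (0:ℝ) ≤ (6/5)*Ac*N + 2*(Real.log N)^2 := by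
        have : (0:ℝ) ≤ (N:ℝ) := by positivity
        nlinarith [Ac_nonneg, sq_nonneg (Real.log N)]
      linarith
    · have h6 : N/6 < N := Nat.div_lt_self (by omega) (by norm_num)
      have ih6 := ih (N/6) h6
      have hstep := psi_le_Sc_add N (by omega)
      have hSc := (Sc_bounds hN).2
      have hc6 : ((N/6:ℕ):ℝ) ≤ (N:ℝ)/6 := div_cast_le N 6 (by norm_num)
      have h61 : (1:ℝ) ≤ ((N/6:ℕ):ℝ) := by exact_mod_cast (by omega : 1 ≤ N/6)
      have hl6 : Real.log ((N/6:ℕ):ℝ) ≤ Real.log (N:ℝ) - Real.log 6 := by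
        have h1 : Real.log ((N/6:ℕ):ℝ) ≤ Real.log ((N:ℝ)/6) :=
          Real.log_le_log (by linarith) hc6
        have h2 : Real.log ((N:ℝ)/6) = Real.log (N:ℝ) - Real.log 6 :=
          Real.log_div (by positivity) (by norm_num)
        linarith
      have hl6nn : 0 ≤ Real.log ((N/6:ℕ):ℝ) := Real.log_nonneg h61
      have hsq : (Real.log ((N/6:ℕ):ℝ))^2 ≤ (Real.log (N:ℝ) - Real.log 6)^2 :=
        pow_le_pow_left₀ hl6nn hl6 2
      have hmul : (6/5) * Ac * ((N/6:ℕ):ℝ) ≤ (6/5) * Ac * ((N:ℝ)/6) := by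
        have := Ac_nonneg
        nlinarith
      have hlogN : (3.39:ℝ) ≤ Real.log (N:ℝ) := by
        have h30 : (30:ℝ) ≤ (N:ℝ) := by exact_mod_cast hN
        have := Real.log_le_log (by norm_num : (0:ℝ) < 30) h30
        linarith [log30_lb]
      have hkey : 5 * Real.log (N:ℝ) + 2 * (Real.log (N:ℝ) - Real.log 6)^2
          ≤ 2 * (Real.log (N:ℝ))^2 := by
        nlinarith [log6_lb, log6_ub, hlogN,
          mul_le_mul_of_nonneg_right log6_lb (by linarith : (0:ℝ) ≤ Real.log (N:ℝ))]
      calc psi N ≤ Sc N + psi (N/6) := hstep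
        _ ≤ (Ac * N + 5 * Real.log N) + ((6/5) * Ac * ((N/6:ℕ):ℝ)
              + 2 * (Real.log ((N/6:ℕ):ℝ))^2 + 110) := by linarith
        _ ≤ (6/5) * Ac * N + 2 * (Real.log N)^2 + 110 := by nlinarith [hmul, hsq, hkey]


lemma psi_no_prime {m t : ℕ} (hm : 1 ≤ m) (ht : 1 ≤ t) (htm : t ≤ m)
    (hnp : ∀ p, p.Prime → p ≤ m → p ≤ t) :
    psi m ≤ psi t + ((Nat.sqrt m : ℝ) + 1) * Real.log m := by
  have hsub : (t+1).primesBelow ⊆ (m+1).primesBelow := by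
    intro p hp
    have h := Nat.mem_primesBelow.mp hp
    exact Nat.mem_primesBelow.mpr ⟨by omega, h.2⟩
  have hrw : psi m = ∑ p ∈ (t+1).primesBelow, (Nat.log p m : ℝ) * Real.log p := by
    rw [psi]
    refine (Finset.sum_subset hsub ?_).symm
    intro p hp hnot
    have h := Nat.mem_primesBelow.mp hp
    have hple : p ≤ t := hnp p h.2 (by omega)
    exact absurd (Nat.mem_primesBelow.mpr ⟨by omega, h.2⟩) hnot
  rw [hrw]
  have key : ∀ p ∈ (t+1).primesBelow, (Nat.log p m : ℝ) * Real.log p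
      ≤ (Nat.log p t : ℝ) * Real.log p
        + (if p ≤ Nat.sqrt m then Real.log m else 0) := by
    intro p hp
    have hmem := Nat.mem_primesBelow.mp hp
    have hpp := hmem.2
    have hpt : p ≤ t := by omega
    have hlogp : 0 ≤ Real.log p := log_p_nonneg hp
    by_cases hsq : p ≤ Nat.sqrt m
    · rw [if_pos hsq]
      have h1 : (Nat.log p m : ℝ) * Real.log p ≤ Real.log m := by
        have hself : p ^ (Nat.log p m) ≤ m := Nat.pow_log_le_self p (by omega)
        have hcast : ((p:ℝ)) ^ (Nat.log p m) ≤ (m:ℝ) := by exact_mod_cast hself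
        have := Real.log_le_log (pow_pos (by exact_mod_cast hpp.pos : (0:ℝ) < (p:ℝ)) _) hcast
        rwa [Real.log_pow] at this
      have h2 : 0 ≤ (Nat.log p t : ℝ) * Real.log p := by positivity
      linarith
    · rw [if_neg hsq]
      push_neg at hsq
      have hmp : m < p ^ 2 := Nat.sqrt_lt'.mp hsq
      have hLm : Nat.log p m ≤ 1 := by
        by_contra hc
        push_neg at hc
        have h2 : p^2 ≤ p ^ (Nat.log p m) := Nat.pow_le_pow_right hpp.pos (by omega)
        have := Nat.pow_log_le_self p (show m ≠ 0 by omega)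
        nlinarith [hmp]
      have hLt : 1 ≤ Nat.log p t := by
        have : p^1 ≤ t := by rwa [pow_one]
        exact (Nat.le_log_iff_pow_le hpp.one_lt (by omega)).mpr this
      have : (Nat.log p m : ℝ) ≤ (Nat.log p t : ℝ) := by exact_mod_cast hLm.trans hLt
      nlinarith
  calc ∑ p ∈ (t+1).primesBelow, (Nat.log p m : ℝ) * Real.log p
      ≤ ∑ p ∈ (t+1).primesBelow, ((Nat.log p t : ℝ) * Real.log p
          + (if p ≤ Nat.sqrt m then Real.log m else 0)) := Finset.sum_le_sum key
    _ = psi t + ∑ p ∈ (t+1).primesBelow, (if p ≤ Nat.sqrt m then Real.log m else 0) := by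
        rw [Finset.sum_add_distrib, psi]
    _ ≤ psi t + ((Nat.sqrt m : ℝ) + 1) * Real.log m := by
        have hlm : 0 ≤ Real.log m := Real.log_nonneg (by exact_mod_cast hm)
        have : ∑ p ∈ (t+1).primesBelow, (if p ≤ Nat.sqrt m then Real.log m else 0)
            = ((((t+1).primesBelow).filter (· ≤ Nat.sqrt m)).card : ℝ) * Real.log m := by
          rw [← Finset.sum_filter]
          simp [Finset.sum_const, nsmul_eq_mul]
        rw [this]
        have hcard : (((t+1).primesBelow).filter (· ≤ Nat.sqrt m)).card ≤ Nat.sqrt m + 1 := by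
          have hsub2 : (((t+1).primesBelow).filter (· ≤ Nat.sqrt m)) ⊆
              Finset.range (Nat.sqrt m + 1) := by
            intro p hp
            have := (Finset.mem_filter.mp hp).2
            exact Finset.mem_range.mpr (by omega)
          calc _ ≤ (Finset.range (Nat.sqrt m + 1)).card := Finset.card_le_card hsub2
            _ = Nat.sqrt m + 1 := Finset.card_range _
        have : ((((t+1).primesBelow).filter (· ≤ Nat.sqrt m)).card : ℝ)
            ≤ (Nat.sqrt m : ℝ) + 1 := by exact_mod_cast hcard
        nlinarith

theorem analytic_case {m : ℕ} (hm : 10000000 ≤ m) :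
    ∃ p, p.Prime ∧ 4*m < 5*p ∧ p ≤ m := by
  by_contra hc
  push_neg at hc
  set t := 4*m/5 with htdef
  have hnp : ∀ p, p.Prime → p ≤ m → p ≤ t := by
    intro p hp hpm
    by_contra hpt
    push_neg at hpt
    have h4 : 4*m < 5*p := by omega
    exact absurd hpm (not_le.mpr (hc p hp h4))
  have ht1 : 1 ≤ t := by omega
  have htm : t ≤ m := by omega
  -- main inequalities
  have hlow : Ac * (m:ℝ) - 5 * Real.log m ≤ psi m :=
    le_trans (Sc_bounds (by omega)).1 (Sc_le_psi m)
  have hmid := psi_no_prime (by omega) ht1 htm hnp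
  have hup := psi_upper t
  -- casts and log bounds
  set x : ℝ := (m:ℝ) with hxdef
  have hx0 : (0:ℝ) ≤ x := by positivity
  have hx7 : (10000000:ℝ) ≤ x := by rw [hxdef]; exact_mod_cast hm
  have hct : (t:ℝ) ≤ 4*x/5 := by
    have := div_cast_le (4*m) 5 (by norm_num)
    rw [htdef]
    push_cast at this ⊢
    linarith
  have hlt : Real.log t ≤ Real.log x := by
    apply Real.log_le_log (by exact_mod_cast ht1)
    rw [hxdef]; exact_mod_cast htm
  have hlt0 : 0 ≤ Real.log t := Real.log_nonneg (by exact_mod_cast ht1)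
  have hltsq : (Real.log t)^2 ≤ (Real.log x)^2 := pow_le_pow_left₀ hlt0 hlt 2
  -- s substitution
  set s : ℝ := Real.sqrt (Real.sqrt (Real.sqrt x)) with hsdef
  have hs0 : 0 ≤ s := Real.sqrt_nonneg _
  have hs2 : s^2 = Real.sqrt (Real.sqrt x) := Real.sq_sqrt (Real.sqrt_nonneg _)
  have hs4 : s^4 = Real.sqrt x := by
    have h2 : (Real.sqrt (Real.sqrt x))^2 = Real.sqrt x := Real.sq_sqrt (Real.sqrt_nonneg _)
    calc s^4 = (s^2)^2 := by ring
      _ = Real.sqrt x := by rw [hs2, h2]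
  have hs8 : s^8 = x := by
    have h1 : (Real.sqrt x)^2 = x := Real.sq_sqrt hx0
    calc s^8 = (s^4)^2 := by ring
      _ = x := by rw [hs4, h1]
  have hlogs : Real.log x = 8 * Real.log s := by
    rw [← hs8, Real.log_pow]; push_cast; ring
  have hs74 : (7.4:ℝ) ≤ s := by
    by_contra hcs
    push_neg at hcs
    have : s^8 < 7.4^8 := by
      apply pow_lt_pow_left₀ hcs hs0
      norm_num
    rw [hs8] at this
    norm_num at this
    linarith
  have hlogx_ub : Real.log x ≤ 8 * s := by
    have h1 : Real.log s ≤ s - 1 := Real.log_le_sub_one_of_pos (by linarith)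
    rw [hlogs]; linarith
  have hlogx0 : 0 ≤ Real.log x := Real.log_nonneg (by linarith)
  have hsqrtm : ((Nat.sqrt m : ℕ) : ℝ) ≤ s^4 := by
    rw [hs4]
    have h2 : ((Nat.sqrt m : ℕ):ℝ)^2 ≤ x := by
      rw [hxdef]; exact_mod_cast Nat.sqrt_le' m
    exact Real.le_sqrt_of_sq_le h2
  -- combine
  have hAc := Ac_lb
  have hAcnn := Ac_nonneg
  have chain : Ac * x - 5 * Real.log x ≤ (6/5) * Ac * (4*x/5) + 2 * (Real.log x)^2 + 110
      + (s^4 + 1) * Real.log x := by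
    have h3 : psi t ≤ (6/5) * Ac * (t:ℝ) + 2 * (Real.log t)^2 + 110 := hup
    have h4 : (6/5) * Ac * (t:ℝ) ≤ (6/5) * Ac * (4*x/5) := by nlinarith
    have h5 : ((Nat.sqrt m : ℕ):ℝ) + 1 ≤ s^4 + 1 := by linarith
    have h6 : (((Nat.sqrt m : ℕ):ℝ) + 1) * Real.log x ≤ (s^4 + 1) * Real.log x := by
      apply mul_le_mul_of_nonneg_right h5 hlogx0
    have hmid' : psi m ≤ psi t + (((Nat.sqrt m : ℕ):ℝ) + 1) * Real.log x := hmid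
    linarith
  -- final contradiction
  have final : Ac * x ≤ (24/25) * Ac * x + 2 * (64 * s^2) + 110 + (s^4 + 6) * (8*s) := by
    have hsq : (Real.log x)^2 ≤ 64 * s^2 := by nlinarith
    have h7 : (s^4 + 1) * Real.log x ≤ (s^4 + 1) * (8*s) := by
      apply mul_le_mul_of_nonneg_left hlogx_ub (by positivity)
    have h8 : 5 * Real.log x ≤ 5 * (8 * s) := by linarith
    nlinarith
  have hR : (1/25) * (Ac * x) ≤ 128 * s^2 + 110 + 8*s^5 + 48*s := by nlinarith [final]
  have hx25 : (0.919/25) * x ≤ (1/25) * (Ac * x) := by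
    nlinarith [mul_nonneg (by linarith : (0:ℝ) ≤ Ac - 0.919) hx0]
  have hs3 : (405:ℝ) ≤ s^3 := by nlinarith [hs74, sq_nonneg s, sq_nonneg (s - 7.4)]
  have hs5 : (0:ℝ) < s^5 := by positivity
  have hs8s : (0.919/25) * x = (0.919/25) * s^8 := by rw [hs8]
  have hbig : (405:ℝ) * s^5 ≤ s^8 := by
    have := mul_le_mul_of_nonneg_right hs3 (le_of_lt hs5)
    calc (405:ℝ) * s^5 ≤ s^3 * s^5 := this
      _ = s^8 := by ring
  have hs2' : (54:ℝ) ≤ s^2 := by nlinarith [hs74]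
  nlinarith [hR, hx25, hbig, hs2', hs74, hs5,
    mul_le_mul_of_nonneg_right hs2' (le_of_lt hs5)]

lemma chain_step {p q : ℕ} (hp : p.Prime) (hq : 4*q ≤ 5*p+3)
    (H : ∀ m : ℕ, 30 ≤ m → m < p → ∃ r, r.Prime ∧ 4*m < 5*r ∧ r ≤ m) :
    ∀ m : ℕ, 30 ≤ m → m < q → ∃ r, r.Prime ∧ 4*m < 5*r ∧ r ≤ m := by
  intro m h30 hmq
  rcases lt_or_ge m p with h | h
  · exact H m h30 h
  · exact ⟨p, hp, by omega, h⟩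

lemma small_cases : ∀ m : ℕ, 30 ≤ m → m < 10278629 → ∃ r, r.Prime ∧ 4*m < 5*r ∧ r ≤ m := by
  refine chain_step (p := 8222911) (by norm_num) (by norm_num) ?_
  refine chain_step (p := 6578333) (by norm_num) (by norm_num) ?_
  refine chain_step (p := 5262667) (by norm_num) (by norm_num) ?_
  refine chain_step (p := 4210139) (by norm_num) (by norm_num) ?_
  refine chain_step (p := 3368117) (by norm_num) (by norm_num) ?_
  refine chain_step (p := 2694533) (by norm_num) (by norm_num) ?_
  refine chain_step (p := 2155627) (by norm_num) (by norm_num) ?_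
  refine chain_step (p := 1724509) (by norm_num) (by norm_num) ?_
  refine chain_step (p := 1379621) (by norm_num) (by norm_num) ?_
  refine chain_step (p := 1103699) (by norm_num) (by norm_num) ?_
  refine chain_step (p := 882967) (by norm_num) (by norm_num) ?_
  refine chain_step (p := 706373) (by norm_num) (by norm_num) ?_
  refine chain_step (p := 565109) (by norm_num) (by norm_num) ?_
  refine chain_step (p := 452087) (by norm_num) (by norm_num) ?_
  refine chain_step (p := 361687) (by norm_num) (by norm_num) ?_
  refine chain_step (p := 289349) (by norm_num) (by norm_num) ?_
  refine chain_step (p := 231481) (by norm_num) (by norm_num) ?_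
  refine chain_step (p := 185189) (by norm_num) (by norm_num) ?_
  refine chain_step (p := 148171) (by norm_num) (by norm_num) ?_
  refine chain_step (p := 118543) (by norm_num) (by norm_num) ?_
  refine chain_step (p := 94837) (by norm_num) (by norm_num) ?_
  refine chain_step (p := 75869) (by norm_num) (by norm_num) ?_
  refine chain_step (p := 60703) (by norm_num) (by norm_num) ?_
  refine chain_step (p := 48571) (by norm_num) (by norm_num) ?_
  refine chain_step (p := 38861) (by norm_num) (by norm_num) ?_
  refine chain_step (p := 31091) (by norm_num) (by norm_num) ?_
  refine chain_step (p := 24889) (by norm_num) (by norm_num) ?_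
  refine chain_step (p := 19919) (by norm_num) (by norm_num) ?_
  refine chain_step (p := 15937) (by norm_num) (by norm_num) ?_
  refine chain_step (p := 12763) (by norm_num) (by norm_num) ?_
  refine chain_step (p := 10223) (by norm_num) (by norm_num) ?_
  refine chain_step (p := 8179) (by norm_num) (by norm_num) ?_
  refine chain_step (p := 6547) (by norm_num) (by norm_num) ?_
  refine chain_step (p := 5237) (by norm_num) (by norm_num) ?_
  refine chain_step (p := 4201) (by norm_num) (by norm_num) ?_
  refine chain_step (p := 3361) (by norm_num) (by norm_num) ?_
  refine chain_step (p := 2689) (by norm_num) (by norm_num) ?_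
  refine chain_step (p := 2153) (by norm_num) (by norm_num) ?_
  refine chain_step (p := 1723) (by norm_num) (by norm_num) ?_
  refine chain_step (p := 1381) (by norm_num) (by norm_num) ?_
  refine chain_step (p := 1109) (by norm_num) (by norm_num) ?_
  refine chain_step (p := 887) (by norm_num) (by norm_num) ?_
  refine chain_step (p := 709) (by norm_num) (by norm_num) ?_
  refine chain_step (p := 571) (by norm_num) (by norm_num) ?_
  refine chain_step (p := 457) (by norm_num) (by norm_num) ?_
  refine chain_step (p := 367) (by norm_num) (by norm_num) ?_
  refine chain_step (p := 293) (by norm_num) (by norm_num) ?_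
  refine chain_step (p := 241) (by norm_num) (by norm_num) ?_
  refine chain_step (p := 199) (by norm_num) (by norm_num) ?_
  refine chain_step (p := 167) (by norm_num) (by norm_num) ?_
  refine chain_step (p := 137) (by norm_num) (by norm_num) ?_
  refine chain_step (p := 109) (by norm_num) (by norm_num) ?_
  refine chain_step (p := 89) (by norm_num) (by norm_num) ?_
  refine chain_step (p := 73) (by norm_num) (by norm_num) ?_
  refine chain_step (p := 59) (by norm_num) (by norm_num) ?_
  refine chain_step (p := 47) (by norm_num) (by norm_num) ?_
  refine chain_step (p := 37) (by norm_num) (by norm_num) ?_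
  refine chain_step (p := 29) (by norm_num) (by norm_num) ?_
  intro m h30 hm
  omega

lemma key_theorem : ∀ m : ℕ, 30 ≤ m → ∃ r, r.Prime ∧ 4*m < 5*r ∧ r ≤ m := by
  intro m hm
  rcases lt_or_ge m 10278629 with h | h
  · exact small_cases m hm h
  · exact analytic_case (by omega)

/-- If `n + r ≥ 48` and `n ≥ 8 + 5r/3`, then there is a prime `p` with
`(n + r)/2 < p < n - 2`. -/
theorem prime_between (n r : ℕ) (h1 : 48 ≤ n + r)
    (h2 : 8 + 5 * (r : ℚ) / 3 ≤ (n : ℚ)) :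
    ∃ p : ℕ, p.Prime ∧ ((n : ℚ) + (r : ℚ)) / 2 < (p : ℚ) ∧ (p : ℚ) < (n : ℚ) - 2 := by
  have hr : 24 + 5*r ≤ 3*n := by
    have h3 : (24 + 5*(r:ℚ)) ≤ 3*(n:ℚ) := by linarith
    exact_mod_cast h3
  have hn33 : 33 ≤ n := by omega
  obtain ⟨p, hp, h4, hle⟩ := key_theorem (n-3) (by omega)
  have hcast : ((n - 3 : ℕ) : ℚ) = (n:ℚ) - 3 := by
    push_cast [Nat.cast_sub (by omega : 3 ≤ n)]; ring
  have h4q : 4*((n:ℚ) - 3) < 5*(p:ℚ) := by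
    have := (by exact_mod_cast h4 : (4*((n-3:ℕ):ℚ)) < 5*(p:ℚ))
    rwa [hcast] at this
  have hleq : (p:ℚ) ≤ (n:ℚ) - 3 := by
    have := (by exact_mod_cast hle : (p:ℚ) ≤ ((n-3:ℕ):ℚ))
    rwa [hcast] at this
  have hrq : 24 + 5*(r:ℚ) ≤ 3*(n:ℚ) := by exact_mod_cast hr
  exact ⟨p, hp, by linarith, by linarith⟩
end

section
/- For each n ∈ {2, 3, 4}, the set of rational numbers α such that the generalized Laguerre polynomial L_n^{(α)}(x) is reducible over ℚ is infinite. -/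
open Polynomial

/-- The generalized binomial coefficient `binomial(t, k) = t(t-1)⋯(t-k+1)/k!` for a
rational number `t` and a natural number `k`. -/
def ratChoose (t : ℚ) (k : ℕ) : ℚ :=
  (∏ i ∈ Finset.range k, (t - (i : ℚ))) / (k.factorial : ℚ)

/-- The generalized Laguerre polynomial with rational parameter `α`:
`L_n^{(α)}(x) = (-1)^n Σ_{j=0}^n binomial(n+α, n-j) (-x)^j / j!`. -/
noncomputable def laguerreParam (n : ℕ) (α : ℚ) : Polynomial ℚ :=
  (-1 : Polynomial ℚ) ^ n *
    ∑ j ∈ Finset.range (n + 1),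
      Polynomial.C (ratChoose ((n : ℚ) + α) (n - j) / (j.factorial : ℚ)) *
        (-Polynomial.X) ^ j

/- ### Auxiliary lemmas -/

lemma not_irred_of_factors {p : ℚ[X]} (a b : ℚ[X]) (h : p = a * b)
    (ha : 0 < a.degree) (hb : 0 < b.degree) : ¬ Irreducible p := fun hi =>
  (hi.isUnit_or_isUnit h).elim (not_isUnit_of_degree_pos a ha) (not_isUnit_of_degree_pos b hb)

/- 2-adic valuation helpers -/

lemma val2_two_zpow (z : ℤ) : padicValRat 2 ((2:ℚ)^z) = z := by
  obtain ⟨n, rfl | rfl⟩ := z.eq_nat_or_neg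
  · rw [zpow_natCast, padicValRat.pow _]
    have : ((2:ℕ):ℚ) = (2:ℚ) := by norm_num
    rw [← this, padicValRat.self (by norm_num)]; ring
  · rw [zpow_neg, zpow_natCast]
    have : ((2:ℕ):ℚ) = (2:ℚ) := by norm_num
    rw [← this, padicValRat.self_pow_inv]

lemma val2_odd {a : ℤ} (ha : ¬ (2:ℤ) ∣ a) : padicValRat 2 ((a:ℚ)) = 0 := by
  rw [padicValRat.of_int, padicValInt.eq_zero_of_not_dvd ha]
  simp

lemma val2_of_eq {q : ℚ} {z : ℤ} {a b : ℤ} (ha : ¬ (2:ℤ) ∣ a) (hb : ¬ (2:ℤ) ∣ b)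
    (hq : q = (2:ℚ)^z * (a:ℚ) / (b:ℚ)) : q ≠ 0 ∧ padicValRat 2 q = z := by
  have ha0 : (a:ℚ) ≠ 0 := by
    simp only [ne_eq, Int.cast_eq_zero]; rintro rfl; exact ha ⟨0, rfl⟩
  have hb0 : (b:ℚ) ≠ 0 := by
    simp only [ne_eq, Int.cast_eq_zero]; rintro rfl; exact hb ⟨0, rfl⟩
  have h2z : (2:ℚ)^z ≠ 0 := zpow_ne_zero _ two_ne_zero
  have hq0 : q ≠ 0 := by rw [hq]; exact div_ne_zero (mul_ne_zero h2z ha0) hb0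
  refine ⟨hq0, ?_⟩
  rw [hq, padicValRat.div (mul_ne_zero h2z ha0) hb0, padicValRat.mul h2z ha0,
    val2_two_zpow, val2_odd ha, val2_odd hb]
  ring

lemma vmul {a b : ℚ} (ha : a ≠ 0) (hb : b ≠ 0) :
    a * b ≠ 0 ∧ padicValRat 2 (a*b) = padicValRat 2 a + padicValRat 2 b :=
  ⟨mul_ne_zero ha hb, padicValRat.mul ha hb⟩

lemma vdiv {a b : ℚ} (ha : a ≠ 0) (hb : b ≠ 0) :
    a / b ≠ 0 ∧ padicValRat 2 (a/b) = padicValRat 2 a - padicValRat 2 b :=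
  ⟨div_ne_zero ha hb, padicValRat.div ha hb⟩

lemma vsq {a : ℚ} (ha : a ≠ 0) :
    a^2 ≠ 0 ∧ padicValRat 2 (a^2) = 2 * padicValRat 2 a :=
  ⟨pow_ne_zero _ ha, by rw [padicValRat.pow a]; norm_num⟩

lemma vadd {a b : ℚ} (ha : a ≠ 0) (hb : b ≠ 0)
    (h : padicValRat 2 a < padicValRat 2 b) :
    a + b ≠ 0 ∧ padicValRat 2 (a+b) = padicValRat 2 a := by
  have hne : a + b ≠ 0 := by
    intro h0
    have hb' : b = -a := by linarith [eq_neg_of_add_eq_zero_right h0]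
    rw [hb', padicValRat.neg] at h
    exact lt_irrefl _ h
  exact ⟨hne, padicValRat.add_eq_of_lt hne ha hb h⟩

/- ### n = 2 -/

lemma red2 (k : ℕ) : ¬ Irreducible (laguerreParam 2 ((k:ℚ)^2 + k - 7/4)) := by
  apply not_irred_of_factors (C (1/2) * (X - C (((k:ℚ)+1)^2 - 1/4)))
    (X - C (((k:ℚ)+1)^2 - 2*((k:ℚ)+1) + 3/4))
  · apply Polynomial.funext; intro x
    simp [laguerreParam, ratChoose, Finset.sum_range_succ, Nat.factorial,
      Finset.prod_range_succ]
    ring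
  · have : (C (1/2 : ℚ) * (X - C (((k:ℚ)+1)^2 - 1/4))).degree = 1 := by
      compute_degree!
    rw [this]; norm_num
  · have : ((X : ℚ[X]) - C (((k:ℚ)+1)^2 - 2*((k:ℚ)+1) + 3/4)).degree = 1 := by
      compute_degree!
    rw [this]; norm_num

/- ### n = 3 -/

lemma red3 (t β : ℚ) (hrel : β*(1-3*t) = 3*t^2 - t^3) :
    ¬ Irreducible (laguerreParam 3 (β - 2)) := by
  apply not_irred_of_factors (C (1/6) * (X - C (β + t)))
    (X^2 + C ((β + t) - 3*(β+1)) * X + C (3*β*(β+1) + ((β + t) - 3*(β+1))*(β + t)))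
  · apply Polynomial.funext; intro x
    simp [laguerreParam, ratChoose, Finset.sum_range_succ, Nat.factorial,
      Finset.prod_range_succ]
    linear_combination hrel / 6
  · have : (C (1/6 : ℚ) * (X - C (β + t))).degree = 1 := by compute_degree!
    rw [this]; norm_num
  · have : ((X : ℚ[X])^2 + C ((β + t) - 3*(β+1)) * X
        + C (3*β*(β+1) + ((β + t) - 3*(β+1))*(β + t))).degree = 2 := by compute_degree!
    rw [this]; norm_num

/- ### n = 4 -/

lemma red4 (m e a : ℚ) (hm : m ≠ 0) (ha : a*(2*m) = e^2 - 8*m)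
    (he : e^2*(m^2-6*m+6) = 16-12*m) : ¬ Irreducible (laguerreParam 4 a) := by
  set A' : ℚ[X] := C (4*m^2) * X^2 + C (4*m^2*e - 4*m*e^2) * X
      + C (e^4 - 2*m*e^3 + 2*m*(m-3)*e^2 + 8*m*e) with hA
  set B' : ℚ[X] := C (4*m^2) * X^2 + C (-(4*m^2*e) - 4*m*e^2) * X
      + C (e^4 + 2*m*e^3 + 2*m*(m-3)*e^2 - 8*m*e) with hB
  have h384 : (384*m^4 : ℚ) ≠ 0 := mul_ne_zero (by norm_num) (pow_ne_zero _ hm)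
  have key : ∀ x : ℚ, 384*m^4 * (eval x (laguerreParam 4 a)) = eval x A' * eval x B' := by
    intro x
    simp [laguerreParam, ratChoose, Finset.sum_range_succ, Nat.factorial,
      Finset.prod_range_succ, hA, hB]
    linear_combination (e^6 + (-4)*m*e^4 + 2*m*e^4*a + 12*m^2*e^2 + 8*m^2*e^2*a
        + 4*m^2*e^2*a^2 + 48*m^3 + 88*m^3*a + 48*m^3*a^2 + 8*m^3*a^3
        + (-8)*x*m*e^4 + (-16)*x*m^2*e^2 + (-16)*x*m^2*e^2*a + (-192)*x*m^3
        + (-160)*x*m^3*a + (-32)*x*m^3*a^2 + 24*x^2*m^2*e^2 + 144*x^2*m^3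
        + 48*x^2*m^3*a + (-32)*x^3*m^3) * ha + (-4*m^2*e^2) * he
  apply not_irred_of_factors (C ((384*m^4)⁻¹) * A') B'
  · apply Polynomial.funext; intro x
    rw [eval_mul, eval_mul, eval_C, mul_assoc, ← key x, inv_mul_cancel_left₀ h384]
  · have h4m : (384*m^4:ℚ)⁻¹ * (4*m^2) ≠ 0 :=
      mul_ne_zero (inv_ne_zero h384) (mul_ne_zero (by norm_num) (pow_ne_zero _ hm))
    have : (C ((384*m^4:ℚ)⁻¹) * A').degree = 2 := by
      rw [hA]; compute_degree!
    rw [this]; norm_num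
  · have : B'.degree = 2 := by
      rw [hB]; compute_degree!
    rw [this]; norm_num

/-- the curve -/
def gq (m : ℚ) : ℚ := -12*m^3+88*m^2-168*m+96

/-- doubling step -/
noncomputable def stepP (p : ℚ × ℚ) : ℚ × ℚ :=
  let m := p.1; let w := p.2
  let l := (-36*m^2 + (176*m + -168)) / (2*w)
  let m' := (l^2 + -88)/(-12) + -(2*m)
  (m', -(l*(m' + -m) + w))

noncomputable def pt (j : ℕ) : ℚ × ℚ := stepP^[j] (-19/16, 671/32)

lemma pt_succ (j : ℕ) : pt (j+1) = stepP (pt j) := Function.iterate_succ_apply' _ _ _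

lemma step_curve {m w : ℚ} (hw : w ≠ 0) (hc : w^2 = gq m) :
    (stepP (m, w)).2^2 = gq (stepP (m, w)).1 := by
  set l : ℚ := (-36*m^2 + (176*m + -168)) / (2*w) with hl
  have h2w : (2*w) ≠ 0 := mul_ne_zero two_ne_zero hw
  have hlw : l*(2*w) = -36*m^2 + (176*m + -168) := by
    rw [hl]; field_simp
  have key : (2*w)^2 * ((stepP (m, w)).2^2 - gq ((stepP (m, w)).1))
      = (2*w)^2 * (w^2 - gq m) := by
    simp only [stepP, gq, ← hl]
    linear_combination ((88/3)*w^2 - 12*m*w^2 - (1/3)*l^2*w^2) * hlw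
  have key2 := mul_left_cancel₀ (pow_ne_zero 2 h2w) key
  have h0 : w^2 - gq m = 0 := by rw [hc]; ring
  rw [h0] at key2; linarith [key2]

lemma step_val {m w : ℚ} {j : ℕ} (hm0 : m ≠ 0) (hw0 : w ≠ 0)
    (hvm : padicValRat 2 m = -(2*(j:ℤ)+4)) (hvw : padicValRat 2 w = -(3*(j:ℤ)+5)) :
    (stepP (m, w)).1 ≠ 0 ∧ (stepP (m, w)).2 ≠ 0 ∧
    padicValRat 2 (stepP (m, w)).1 = -(2*((j:ℤ)+1)+4) ∧
    padicValRat 2 (stepP (m, w)).2 = -(3*((j:ℤ)+1)+5) := by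
  have e176 : (176:ℚ) ≠ 0 ∧ padicValRat 2 (176:ℚ) = 4 :=
    val2_of_eq (a := 11) (b := 1) (by decide) (by decide) (by norm_num)
  have e168 : (-168:ℚ) ≠ 0 ∧ padicValRat 2 (-168:ℚ) = 3 :=
    val2_of_eq (a := -21) (b := 1) (by decide) (by decide) (by norm_num)
  have e36 : (-36:ℚ) ≠ 0 ∧ padicValRat 2 (-36:ℚ) = 2 :=
    val2_of_eq (a := -9) (b := 1) (by decide) (by decide) (by norm_num)
  have e88 : (-88:ℚ) ≠ 0 ∧ padicValRat 2 (-88:ℚ) = 3 :=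
    val2_of_eq (a := -11) (b := 1) (by decide) (by decide) (by norm_num)
  have e12 : (-12:ℚ) ≠ 0 ∧ padicValRat 2 (-12:ℚ) = 2 :=
    val2_of_eq (a := -3) (b := 1) (by decide) (by decide) (by norm_num)
  have e2 : (2:ℚ) ≠ 0 ∧ padicValRat 2 (2:ℚ) = 1 :=
    val2_of_eq (a := 1) (b := 1) (by decide) (by decide) (by norm_num)
  -- numerator of l
  have h1 := vmul e176.1 hm0
  have h2 := vadd h1.1 e168.1 (by rw [h1.2, e176.2, e168.2, hvm]; omega)
  have hm2 := vsq hm0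
  have h3 := vmul e36.1 hm2.1
  have h4 := vadd h3.1 h2.1 (by rw [h3.2, h2.2, h1.2, e36.2, e176.2, hm2.2, hvm]; omega)
  -- l
  have h5 := vmul e2.1 hw0
  have h6 := vdiv h4.1 h5.1
  have hl : padicValRat 2 ((-36*m^2 + (176*m + -168)) / (2*w)) = -((j:ℤ)+2) := by
    rw [h6.2, h4.2, h3.2, e36.2, hm2.2, hvm, h5.2, e2.2, hvw]; omega
  -- m'
  have h7 := vsq h6.1
  have h8 := vadd h7.1 e88.1 (by rw [h7.2, hl, e88.2]; omega)
  have h9 := vdiv h8.1 e12.1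
  have h10 : -(2*m) ≠ 0 ∧ padicValRat 2 (-(2*m)) = 1 + -(2*(j:ℤ)+4) := by
    constructor
    · simp [hm0]
    · rw [padicValRat.neg, (vmul e2.1 hm0).2, e2.2, hvm]
  have h11 := vadd h9.1 h10.1
    (by rw [h9.2, h8.2, h7.2, hl, e12.2, h10.2]; omega)
  -- w'
  have h12 := vadd h11.1 (show -m ≠ 0 from neg_ne_zero.mpr hm0)
    (by rw [h11.2, h9.2, h8.2, h7.2, hl, e12.2, padicValRat.neg, hvm]; omega)
  have h13 := vmul h6.1 h12.1
  have h14 := vadd h13.1 hw0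
    (by rw [h13.2, hl, h12.2, h11.2, h9.2, h8.2, h7.2, hl, e12.2, hvw]; omega)
  refine ⟨?_, ?_, ?_, ?_⟩ <;> simp only [stepP]
  · exact h11.1
  · exact neg_ne_zero.mpr h14.1
  · rw [h11.2, h9.2, h8.2, h7.2, hl, e12.2]; omega
  · rw [padicValRat.neg, h14.2, h13.2, hl, h12.2, h11.2, h9.2, h8.2, h7.2, hl, e12.2]; omega

lemma pt_spec (j : ℕ) : (pt j).1 ≠ 0 ∧ (pt j).2 ≠ 0 ∧
    padicValRat 2 (pt j).1 = -(2*(j:ℤ)+4) ∧ padicValRat 2 (pt j).2 = -(3*(j:ℤ)+5) ∧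
    (pt j).2^2 = gq (pt j).1 := by
  induction j with
  | zero =>
    have h1 : ((-19/16 : ℚ)) ≠ 0 ∧ padicValRat 2 ((-19/16:ℚ)) = -4 :=
      val2_of_eq (z := -4) (a := -19) (b := 1) (by decide) (by decide) (by norm_num)
    have h2 : ((671/32 : ℚ)) ≠ 0 ∧ padicValRat 2 ((671/32:ℚ)) = -5 :=
      val2_of_eq (z := -5) (a := 671) (b := 1) (by decide) (by decide) (by norm_num)
    refine ⟨h1.1, h2.1, ?_, ?_, ?_⟩
    · rw [show (pt 0).1 = (-19/16 : ℚ) from rfl, h1.2]; norm_num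
    · rw [show (pt 0).2 = (671/32 : ℚ) from rfl, h2.2]; norm_num
    · show ((671/32:ℚ))^2 = gq (-19/16); rw [gq]; norm_num
  | succ n ih =>
    obtain ⟨hm0, hw0, hvm, hvw, hcur⟩ := ih
    have hp : pt (n+1) = stepP ((pt n).1, (pt n).2) := by rw [pt_succ]
    have hv := step_val hm0 hw0 hvm hvw
    have hc := step_curve hw0 hcur
    rw [hp]
    refine ⟨hv.1, hv.2.1, ?_, ?_, hc⟩
    · rw [hv.2.2.1]; push_cast; ring
    · rw [hv.2.2.2]; push_cast; ring

/-- the parameter sequence for n = 4 -/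
noncomputable def aseq (j : ℕ) : ℚ :=
  ((pt j).2/((pt j).1^2 - 6*(pt j).1 + 6))^2 / (2*(pt j).1) - 4

lemma aseq_spec (j : ℕ) :
    (aseq j + 4 ≠ 0 ∧ padicValRat 2 (aseq j + 4) = 4*(j:ℤ)+9) ∧
    ¬ Irreducible (laguerreParam 4 (aseq j)) := by
  obtain ⟨hm0, hw0, hvm, hvw, hcur⟩ := pt_spec j
  set m := (pt j).1 with hmdef
  set w := (pt j).2 with hwdef
  have e6 : (6:ℚ) ≠ 0 ∧ padicValRat 2 (6:ℚ) = 1 :=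
    val2_of_eq (a := 3) (b := 1) (by decide) (by decide) (by norm_num)
  have e2 : (2:ℚ) ≠ 0 ∧ padicValRat 2 (2:ℚ) = 1 :=
    val2_of_eq (a := 1) (b := 1) (by decide) (by decide) (by norm_num)
  have hm2 := vsq hm0
  have h6m : -(6*m) ≠ 0 ∧ padicValRat 2 (-(6*m)) = 1 + -(2*(j:ℤ)+4) := by
    refine ⟨by simp [hm0], ?_⟩
    rw [padicValRat.neg, (vmul e6.1 hm0).2, e6.2, hvm]
  have h1 := vadd hm2.1 h6m.1 (by rw [hm2.2, hvm, h6m.2]; omega)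
  have h2 := vadd h1.1 e6.1 (by rw [h1.2, hm2.2, hvm, e6.2]; omega)
  have hd : m^2 - 6*m + 6 ≠ 0 ∧ padicValRat 2 (m^2 - 6*m + 6) = -(4*(j:ℤ)+8) := by
    have hrw : m^2 - 6*m + 6 = m^2 + -(6*m) + 6 := by ring
    rw [hrw]
    exact ⟨h2.1, by rw [h2.2, h1.2, hm2.2, hvm]; omega⟩
  have he := vdiv hw0 hd.1
  have he2 := vsq he.1
  have h2m := vmul e2.1 hm0
  have hu := vdiv he2.1 h2m.1
  have hval : padicValRat 2 ((w/(m^2 - 6*m + 6))^2 / (2*m)) = 4*(j:ℤ)+9 := by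
    rw [hu.2, he2.2, he.2, hvw, hd.2, h2m.2, e2.2, hvm]; omega
  have haseq : aseq j + 4 = (w/(m^2 - 6*m + 6))^2 / (2*m) := by
    rw [aseq, ← hmdef, ← hwdef]; ring
  constructor
  · rw [haseq]; exact ⟨hu.1, hval⟩
  · -- reducibility
    have hrel : ((w/(m^2-6*m+6))^2*(m^2-6*m+6) : ℚ) = 16-12*m := by
      have hgq : w^2 = gq m := hcur
      rw [gq] at hgq
      rw [div_pow, div_mul_eq_mul_div, div_eq_iff (pow_ne_zero 2 hd.1)]
      linear_combination (m^2-6*m+6) * hgq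
    have harel : (aseq j)*(2*m) = (w/(m^2-6*m+6))^2 - 8*m := by
      rw [aseq, ← hmdef, ← hwdef]
      field_simp [hd.1]
      ring
    exact red4 m (w/(m^2-6*m+6)) (aseq j) hm0 harel hrel

theorem laguerreParam_reducible_infinite :
    ∀ n ∈ ({2, 3, 4} : Set ℕ),
      {α : ℚ | ¬ Irreducible (laguerreParam n α)}.Infinite := by
  intro n hn
  simp only [Set.mem_insert_iff, Set.mem_singleton_iff] at hn
  rcases hn with rfl | rfl | rfl
  · -- n = 2
    apply Set.infinite_of_injective_forall_mem
      (f := fun k : ℕ => (k:ℚ)^2 + k - 7/4) ?_ ?_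
    · have hmono : StrictMono (fun k : ℕ => (k:ℚ)^2 + k - 7/4) := by
        apply strictMono_nat_of_lt_succ
        intro n
        have : (0:ℚ) ≤ (n:ℚ) := Nat.cast_nonneg n
        push_cast
        nlinarith
      exact hmono.injective
    · intro k; exact red2 k
  · -- n = 3
    apply Set.infinite_of_injective_forall_mem
      (f := fun k : ℕ => (k:ℚ)*((k:ℚ)+3)^2/(3*(k:ℚ)+8) - 2) ?_ ?_
    · have hmono : StrictMono (fun k : ℕ => (k:ℚ)*((k:ℚ)+3)^2/(3*(k:ℚ)+8) - 2) := by
        apply strictMono_nat_of_lt_succ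
        intro n
        have h0 : (0:ℚ) ≤ (n:ℚ) := Nat.cast_nonneg n
        have d1 : (0:ℚ) < 3*(n:ℚ)+8 := by linarith
        have d2 : (0:ℚ) < 3*((n:ℚ)+1)+8 := by linarith
        push_cast
        rw [sub_lt_sub_iff_right, div_lt_div_iff₀ d1 (by linarith)]
        nlinarith
      exact hmono.injective
    · intro k
      simp only [Set.mem_setOf_eq]
      have heq : (k:ℚ)*((k:ℚ)+3)^2/(3*(k:ℚ)+8) - 2
          = ((k:ℚ)*((k:ℚ)+3)^2/(3*(k:ℚ)+8)) - 2 := rfl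
      rw [heq]
      apply red3 ((k:ℚ)+3)
      have d1 : (3*(k:ℚ)+8) ≠ 0 := by positivity
      field_simp
      ring
  · -- n = 4
    apply Set.infinite_of_injective_forall_mem (f := aseq) ?_ ?_
    · intro i j hij
      have hi := (aseq_spec i).1
      have hj := (aseq_spec j).1
      have : padicValRat 2 (aseq i + 4) = padicValRat 2 (aseq j + 4) := by rw [hij]
      rw [hi.2, hj.2] at this
      omega
    · intro j
      exact (aseq_spec j).2
end
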